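/- arXiv:2010.11586 — 8 statements merged into one kernel-verified Lean document; each statement's English description precedes it below -/
import Mathlib

section
/- Let α, β > −1 be real numbers, let θ be a positive even integer, let r, c₀ be real numbers, and let n ≠ m be integers with n, m ≥ 1. Suppose yₙ, yₘ : ℝ → ℝ are polynomial functions such that for i ∈ {n, m} and all real x: (x−r)(1−x²)yᵢ''(x) + (−(α+β+θ+2)x² + (β−α+r(α+β+2))x + θ − r(β−α))yᵢ'(x) + (i(i+α+β+θ+1)(x−r) − c₀)yᵢ(x) = 0. Then ∫_{−1}^{1} (x−r)^θ (1−x)^α (1+x)^β yₙ(x) yₘ(x) dx = 0. -/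
/-!
With `w = (x - r)^θ (1 - x)^α (1 + x)^β` and `W = (1 - x^2) w` (the same weight with `α + 1`,
`β + 1`), one has `(x - r) W' = w q` for the first-order coefficient `q` of the equation, so away
from `x = r` the equation takes the Sturm–Liouville form `(W y')' = -w (λ - c₀/(x - r)) y`.
For two eigenfunctions the `c₀` terms cancel in the Lagrange identity, giving
`(W (y_n' y_m - y_n y_m'))' = (λ_m - λ_n) w y_n y_m` off the single point `x = r`; `W` vanishes at
`±1` since `α, β > -1`, so integrating yields `(λ_m - λ_n) ∫ w y_n y_m = 0`, and `λ_m ≠ λ_n`.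
-/
open Polynomial Set MeasureTheory

noncomputable section X1Jacobi

variable (α β : ℝ) (θ : ℕ) (r : ℝ)

def x1Weight (x : ℝ) : ℝ := (x - r) ^ θ * (1 - x) ^ α * (1 + x) ^ β

def x1Drift (x : ℝ) : ℝ :=
  -(α + β + θ + 2) * x ^ 2 + (β - α + r * (α + β + 2)) * x + θ - r * (β - α)

def x1Eigenvalue (i : ℝ) : ℝ := i * (i + α + β + θ + 1)

variable {α β θ r}

theorem continuous_x1Weight (hα : 0 ≤ α) (hβ : 0 ≤ β) : Continuous (x1Weight α β θ r) := by
  unfold x1Weight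
  have := Real.continuous_rpow_const hα
  have := Real.continuous_rpow_const hβ
  fun_prop

theorem x1Weight_one (hα : α ≠ 0) : x1Weight α β θ r 1 = 0 := by
  simp [x1Weight, Real.zero_rpow hα]

theorem x1Weight_neg_one (hβ : β ≠ 0) : x1Weight α β θ r (-1) = 0 := by
  simp [x1Weight, Real.zero_rpow hβ]

theorem x1Weight_add_one {x : ℝ} (hx : x ∈ Ioo (-1 : ℝ) 1) :
    x1Weight (α + 1) (β + 1) θ r x = x1Weight α β θ r x * (1 - x ^ 2) := by
  have h1 : 1 - x ≠ 0 := by linarith [hx.2]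
  have h2 : 1 + x ≠ 0 := by linarith [hx.1]
  simp only [x1Weight, Real.rpow_add_one h1, Real.rpow_add_one h2]
  ring

theorem hasDerivAt_x1Weight_add_one {x : ℝ} (hx : x ∈ Ioo (-1 : ℝ) 1) (hxr : x ≠ r) :
    HasDerivAt (x1Weight (α + 1) (β + 1) θ r)
      (x1Weight α β θ r x * x1Drift α β θ r x / (x - r)) x := by
  have h1 : 1 - x ≠ 0 := by linarith [hx.2]
  have h2 : 1 + x ≠ 0 := by linarith [hx.1]
  have hd := ((((hasDerivAt_id x).sub_const r).fun_pow θ).fun_mul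
    (((hasDerivAt_id x).const_sub 1).rpow_const (p := α + 1) (Or.inl h1))).fun_mul
    (((hasDerivAt_id x).const_add 1).rpow_const (p := β + 1) (Or.inl h2))
  have hpow : (θ : ℝ) * (x - r) ^ (θ - 1) * (x - r) = θ * (x - r) ^ θ := by
    cases θ <;> simp [pow_succ, mul_assoc]
  refine hd.congr_deriv ?_
  simp only [x1Weight, x1Drift, add_sub_cancel_right, id_eq]
  rw [Real.rpow_add_one h1, Real.rpow_add_one h2, eq_div_iff (sub_ne_zero.2 hxr)]
  linear_combination (1 - x) ^ α * (1 + x) ^ β * (1 - x) * (1 + x) * hpow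

theorem hasDerivAt_x1Weight_add_one_mul {y y' : ℝ → ℝ} {y'' i c0 x : ℝ}
    (hx : x ∈ Ioo (-1 : ℝ) 1) (hxr : x ≠ r) (hy' : HasDerivAt y' y'' x)
    (hode : (x - r) * (1 - x ^ 2) * y'' + x1Drift α β θ r x * y' x
      + (x1Eigenvalue α β θ i * (x - r) - c0) * y x = 0) :
    HasDerivAt (fun t => x1Weight (α + 1) (β + 1) θ r t * y' t)
      (-(x1Weight α β θ r x * (x1Eigenvalue α β θ i - c0 / (x - r)) * y x)) x := by
  refine ((hasDerivAt_x1Weight_add_one hx hxr).mul hy').congr_deriv ?_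
  have hxr' : x - r ≠ 0 := sub_ne_zero.2 hxr
  rw [x1Weight_add_one hx]
  field_simp
  linear_combination x1Weight α β θ r x * hode

theorem x1Eigenvalue_ne {n m : ℝ} (hnm : n ≠ m) (hpos : 0 < n + m + α + β + θ + 1) :
    x1Eigenvalue α β θ n ≠ x1Eigenvalue α β θ m := by
  intro h
  have : (n - m) * (n + m + α + β + θ + 1) = 0 := by
    unfold x1Eigenvalue at h; linear_combination h
  rcases mul_eq_zero.1 this with h | h
  · exact hnm (sub_eq_zero.1 h)
  · exact hpos.ne' h

end X1Jacobi

theorem HasDerivAt.mul_wronskian {𝕜 : Type*} [NontriviallyNormedField 𝕜]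
    {p u u' v v' : 𝕜 → 𝕜} {A B x : 𝕜} (hu : HasDerivAt u (u' x) x) (hv : HasDerivAt v (v' x) x)
    (hA : HasDerivAt (fun t => p t * u' t) A x) (hB : HasDerivAt (fun t => p t * v' t) B x) :
    HasDerivAt (fun t => p t * (u' t * v t - u t * v' t)) (A * v x - u x * B) x := by
  have hfun : (fun t => p t * (u' t * v t - u t * v' t))
      = fun t => p t * u' t * v t - u t * (p t * v' t) := funext fun t => by ring
  rw [hfun]
  exact ((hA.fun_mul hv).fun_sub (hu.fun_mul hB)).congr_deriv (by ring)

theorem x1_jacobi_orthogonality_general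
    (α β : ℝ) (hα : -1 < α) (hβ : -1 < β)
    (θ : ℕ)
    (r c0 : ℝ) (n m : ℤ) (hn : 1 ≤ n) (hm : 1 ≤ m) (hnm : n ≠ m)
    (yn ym : ℝ → ℝ)
    (hynpoly : ∃ P : Polynomial ℝ, ∀ x, yn x = P.eval x)
    (hympoly : ∃ P : Polynomial ℝ, ∀ x, ym x = P.eval x)
    (heqn : ∀ x : ℝ,
      (x - r) * (1 - x ^ 2) * deriv (deriv yn) x
        + (-(α + β + θ + 2) * x ^ 2 + (β - α + r * (α + β + 2)) * x
            + θ - r * (β - α)) * deriv yn x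
        + ((n : ℝ) * ((n : ℝ) + α + β + θ + 1) * (x - r) - c0) * yn x = 0)
    (heqm : ∀ x : ℝ,
      (x - r) * (1 - x ^ 2) * deriv (deriv ym) x
        + (-(α + β + θ + 2) * x ^ 2 + (β - α + r * (α + β + 2)) * x
            + θ - r * (β - α)) * deriv ym x
        + ((m : ℝ) * ((m : ℝ) + α + β + θ + 1) * (x - r) - c0) * ym x = 0) :
    ∫ x in (-1 : ℝ)..1, (x - r) ^ θ * (1 - x) ^ α * (1 + x) ^ β * yn x * ym x = 0 := by
  obtain ⟨P, rfl⟩ : ∃ P : ℝ[X], yn = fun x => P.eval x := hynpoly.imp fun _ => funext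
  obtain ⟨Q, rfl⟩ : ∃ Q : ℝ[X], ym = fun x => Q.eval x := hympoly.imp fun _ => funext
  have hderiv (R : ℝ[X]) : deriv (fun x => R.eval x) = fun x => R.derivative.eval x :=
    funext fun _ => R.deriv
  simp only [hderiv] at heqn heqm
  by_cases hint : IntervalIntegrable
      (fun x => x1Weight α β θ r x * P.eval x * Q.eval x) volume (-1) 1
  swap
  · -- the integral is `0` by convention, so integrability need not be proved
    exact intervalIntegral.integral_undef hint
  set F := fun x => x1Weight (α + 1) (β + 1) θ r x
    * (P.derivative.eval x * Q.eval x - P.eval x * Q.derivative.eval x)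
  have hF : ∀ x ∈ Ioo (-1 : ℝ) 1 \ {r}, HasDerivAt F ((x1Eigenvalue α β θ m - x1Eigenvalue α β θ n)
      * (x1Weight α β θ r x * P.eval x * Q.eval x)) x := by
    rintro x ⟨hx, hxr⟩
    have hP := hasDerivAt_x1Weight_add_one_mul (α := α) (β := β) (θ := θ) (i := n) (c0 := c0)
      (y := fun x => P.eval x) hx hxr (P.derivative.hasDerivAt x) (heqn x)
    have hQ := hasDerivAt_x1Weight_add_one_mul (α := α) (β := β) (θ := θ) (i := m) (c0 := c0)
      (y := fun x => Q.eval x) hx hxr (Q.derivative.hasDerivAt x) (heqm x)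
    refine ((P.hasDerivAt x).mul_wronskian (Q.hasDerivAt x) hP hQ).congr_deriv ?_
    ring
  have hFTC := integral_eq_of_hasDerivAt_off_countable_of_le F _ (by norm_num)
    (countable_singleton r)
    (((continuous_x1Weight (by linarith) (by linarith)).mul (by fun_prop)).continuousOn) hF
    (hint.const_mul _)
  rw [intervalIntegral.integral_const_mul] at hFTC
  simp only [F, x1Weight_one (by linarith : α + 1 ≠ 0), x1Weight_neg_one (by linarith : β + 1 ≠ 0),
    zero_mul, sub_zero] at hFTC
  refine (mul_eq_zero.1 hFTC).resolve_left (sub_ne_zero.2 (x1Eigenvalue_ne (Ne.symm ?_) ?_))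
  · exact_mod_cast hnm
  · have : (1 : ℝ) ≤ n := by exact_mod_cast hn
    have : (1 : ℝ) ≤ m := by exact_mod_cast hm
    linarith [θ.cast_nonneg (α := ℝ)]

/-- Orthogonality of exceptional X₁-Jacobi polynomials on [-1,1] with respect to the
weight `(x-r)^θ (1-x)^α (1+x)^β`. -/
theorem x1_jacobi_orthogonality
    (α β : ℝ) (hα : -1 < α) (hβ : -1 < β)
    (θ : ℕ) (hθpos : 0 < θ) (hθeven : Even θ)
    (r c0 : ℝ) (n m : ℤ) (hn : 1 ≤ n) (hm : 1 ≤ m) (hnm : n ≠ m)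
    (yn ym : ℝ → ℝ)
    (hynpoly : ∃ P : Polynomial ℝ, ∀ x, yn x = P.eval x)
    (hympoly : ∃ P : Polynomial ℝ, ∀ x, ym x = P.eval x)
    (heqn : ∀ x : ℝ,
      (x - r) * (1 - x ^ 2) * deriv (deriv yn) x
        + (-(α + β + θ + 2) * x ^ 2 + (β - α + r * (α + β + 2)) * x
            + θ - r * (β - α)) * deriv yn x
        + ((n : ℝ) * ((n : ℝ) + α + β + θ + 1) * (x - r) - c0) * yn x = 0)
    (heqm : ∀ x : ℝ,
      (x - r) * (1 - x ^ 2) * deriv (deriv ym) x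
        + (-(α + β + θ + 2) * x ^ 2 + (β - α + r * (α + β + 2)) * x
            + θ - r * (β - α)) * deriv ym x
        + ((m : ℝ) * ((m : ℝ) + α + β + θ + 1) * (x - r) - c0) * ym x = 0) :
    ∫ x in (-1 : ℝ)..1, (x - r) ^ θ * (1 - x) ^ α * (1 + x) ^ β * yn x * ym x = 0 :=
  x1_jacobi_orthogonality_general α β hα hβ θ r c0 n m hn hm hnm yn ym hynpoly hympoly heqn heqm
end

section
/- Let α > −1 be real, let θ be a positive even integer, let r, c₀ be real numbers, and let n ≠ m be integers with n, m ≥ 1. Suppose yₙ, yₘ : ℝ → ℝ are polynomial functions such that for i ∈ {n, m} and all real x: x(x−r)yᵢ''(x) + (−x² + (α+r+θ+1)x − r(α+1))yᵢ'(x) + (i(x−r) − c₀)yᵢ(x) = 0. Then ∫₀^∞ (x−r)^θ x^α e^{−x} yₙ(x) yₘ(x) dx = 0. -/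
/-!
Multiplying the equation for `yᵢ` by `x^α (x-r)^(θ-1) e^{-x}` puts it in Sturm–Liouville form
`(p yᵢ')' + i w yᵢ - c₀ w/(x-r) yᵢ = 0`, where `p = x^(α+1) (x-r)^θ e^{-x}` and `w` is the weight.
Hence `p` times the Wronskian `yₘ yₙ' - yₘ' yₙ` is an antiderivative of `(m - n) w yₙ yₘ`. It
vanishes at `0` because `α + 1 > 0` and at `∞` because of `e^{-x}`, so the integral is zero.
-/

open MeasureTheory Filter Set Polynomial Topology

namespace Polynomial

theorem integrableOn_rpow_mul_exp_neg_mul_eval {s : ℝ} (hs : -1 < s) (R : ℝ[X]) :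
    IntegrableOn (fun x => x ^ s * Real.exp (-x) * R.eval x) (Ioi 0) := by
  induction R using Polynomial.induction_on' with
  | add p q hp hq => exact (hp.add hq).congr_fun (fun x _ => by simp [mul_add]) measurableSet_Ioi
  | monomial k a =>
    have hk : 0 < s + k + 1 := by linarith [(Nat.cast_nonneg k : (0 : ℝ) ≤ k)]
    refine IntegrableOn.congr_fun ((Real.GammaIntegral_convergent hk).const_mul a)
      (fun x hx => ?_) measurableSet_Ioi
    rw [eval_monomial, add_sub_cancel_right, Real.rpow_add hx, Real.rpow_natCast]
    ring

theorem tendsto_rpow_mul_exp_neg_mul_eval_atTop (s : ℝ) (R : ℝ[X]) :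
    Tendsto (fun x => x ^ s * Real.exp (-x) * R.eval x) atTop (𝓝 0) := by
  induction R using Polynomial.induction_on' with
  | add p q hp hq => simpa [mul_add] using hp.add hq
  | monomial k a =>
    have h := (tendsto_rpow_mul_exp_neg_mul_atTop_nhds_zero (s + k) 1 one_pos).const_mul a
    rw [mul_zero] at h
    refine h.congr' ?_
    filter_upwards [eventually_gt_atTop 0] with x hx
    rw [eval_monomial, Real.rpow_add hx, Real.rpow_natCast, neg_one_mul]
    ring

theorem deriv_eval_eq (P : ℝ[X]) :
    deriv (fun x => P.eval x) = fun x : ℝ => P.derivative.eval x := by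
  ext x
  exact P.deriv

end Polynomial

def IsX1LaguerreEigenpoly (α r : ℝ) (θ : ℕ) (c0 ev : ℝ) (P : ℝ[X]) : Prop :=
  ∀ x : ℝ, x * (x - r) * P.derivative.derivative.eval x
    + (-x ^ 2 + (α + r + θ + 1) * x - r * (α + 1)) * P.derivative.eval x
    + (ev * (x - r) - c0) * P.eval x = 0

namespace IsX1LaguerreEigenpoly

variable {α r c0 ev ev' : ℝ} {θ : ℕ} {P Q : ℝ[X]}

theorem of_deriv
    (h : ∀ x : ℝ, x * (x - r) * deriv (deriv fun x => P.eval x) x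
      + (-x ^ 2 + (α + r + θ + 1) * x - r * (α + 1)) * deriv (fun x => P.eval x) x
      + (ev * (x - r) - c0) * P.eval x = 0) :
    IsX1LaguerreEigenpoly α r θ c0 ev P := by
  intro x
  simpa only [deriv_eval_eq] using h x

theorem wronskian_eq (hP : IsX1LaguerreEigenpoly α r θ c0 ev P)
    (hQ : IsX1LaguerreEigenpoly α r θ c0 ev' Q) (x : ℝ) :
    (-x ^ 2 + (α + r + θ + 1) * x - r * (α + 1)) * (wronskian Q P).eval x
      + x * (x - r) * (wronskian Q P).derivative.eval x
      = (ev' - ev) * (x - r) * P.eval x * Q.eval x := by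
  simp only [wronskian, derivative_sub, derivative_mul, eval_sub, eval_add, eval_mul]
  linear_combination Q.eval x * hP x - P.eval x * hQ x

theorem hasDerivAt_weightedWronskian (hθ : 0 < θ) (hP : IsX1LaguerreEigenpoly α r θ c0 ev P)
    (hQ : IsX1LaguerreEigenpoly α r θ c0 ev' Q) {x : ℝ} (hx : 0 < x) :
    HasDerivAt (fun x => x ^ (α + 1) * Real.exp (-x) * ((X - C r) ^ θ * wronskian Q P).eval x)
      ((ev' - ev) * ((x - r) ^ θ * x ^ α * Real.exp (-x) * P.eval x * Q.eval x)) x := by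
  have hpow : HasDerivAt (fun y : ℝ => y ^ (α + 1)) ((α + 1) * x ^ α) x := by
    simpa using Real.hasDerivAt_rpow_const (p := α + 1) (Or.inl hx.ne')
  have hexp : HasDerivAt (fun y : ℝ => Real.exp (-y)) (-Real.exp (-x)) x := by
    simpa using (hasDerivAt_neg x).exp
  refine ((hpow.mul hexp).mul (Polynomial.hasDerivAt _ x)).congr_deriv ?_
  obtain ⟨t, rfl⟩ := Nat.exists_eq_add_one.mpr hθ
  simp only [Pi.mul_apply, derivative_mul, derivative_pow, derivative_sub, derivative_X,
    derivative_C, eval_mul, eval_add, eval_pow, eval_sub, eval_X, eval_C, eval_one, eval_zero,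
    Nat.add_sub_cancel]
  have hW := wronskian_eq hP hQ x
  push_cast at hW ⊢
  rw [Real.rpow_add_one hx.ne']
  linear_combination x ^ α * Real.exp (-x) * (x - r) ^ t * hW

theorem integral_weight_mul_eq_zero (hα : -1 < α) (hθ : 0 < θ) (hne : ev ≠ ev')
    (hP : IsX1LaguerreEigenpoly α r θ c0 ev P) (hQ : IsX1LaguerreEigenpoly α r θ c0 ev' Q) :
    ∫ x in Ioi 0, (x - r) ^ θ * x ^ α * Real.exp (-x) * P.eval x * Q.eval x = 0 := by
  set F : ℝ → ℝ := fun x => x ^ (α + 1) * Real.exp (-x) * ((X - C r) ^ θ * wronskian Q P).eval x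
  have hcont : ContinuousWithinAt F (Ici 0) 0 :=
    (((Real.continuousAt_rpow_const 0 (α + 1) (Or.inr (by linarith))).mul
      (Real.continuous_exp.comp continuous_neg).continuousAt).mul
      (Polynomial.continuous _).continuousAt).continuousWithinAt
  have hint : IntegrableOn
      (fun x => (ev' - ev) * ((x - r) ^ θ * x ^ α * Real.exp (-x) * P.eval x * Q.eval x))
      (Ioi 0) :=
    IntegrableOn.congr_fun
      (integrableOn_rpow_mul_exp_neg_mul_eval hα (C (ev' - ev) * (X - C r) ^ θ * P * Q))
      (fun x _ => by simp only [eval_mul, eval_pow, eval_sub, eval_X, eval_C]; ring)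
      measurableSet_Ioi
  have hF0 : F 0 = 0 := by simp [F, Real.zero_rpow (by linarith : α + 1 ≠ 0)]
  have key := integral_Ioi_of_hasDerivAt_of_tendsto hcont
    (fun _ hx => hasDerivAt_weightedWronskian hθ hP hQ hx) hint
    (tendsto_rpow_mul_exp_neg_mul_eval_atTop (α + 1) _)
  rw [hF0, sub_zero, integral_const_mul] at key
  exact (mul_eq_zero.mp key).resolve_left (sub_ne_zero.mpr hne.symm)

end IsX1LaguerreEigenpoly

theorem x1_laguerre_orthogonality_general
    (α : ℝ) (hα : -1 < α)
    (θ : ℕ) (hθpos : 0 < θ)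
    (r c0 : ℝ) (n m : ℤ) (hnm : n ≠ m)
    (yn ym : ℝ → ℝ)
    (hynpoly : ∃ P : Polynomial ℝ, ∀ x, yn x = P.eval x)
    (hympoly : ∃ P : Polynomial ℝ, ∀ x, ym x = P.eval x)
    (heqn : ∀ x : ℝ,
      x * (x - r) * deriv (deriv yn) x
        + (-x ^ 2 + (α + r + θ + 1) * x - r * (α + 1)) * deriv yn x
        + ((n : ℝ) * (x - r) - c0) * yn x = 0)
    (heqm : ∀ x : ℝ,
      x * (x - r) * deriv (deriv ym) x
        + (-x ^ 2 + (α + r + θ + 1) * x - r * (α + 1)) * deriv ym x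
        + ((m : ℝ) * (x - r) - c0) * ym x = 0) :
    ∫ x in Set.Ioi (0 : ℝ),
      (x - r) ^ θ * x ^ α * Real.exp (-x) * yn x * ym x = 0 := by
  obtain ⟨P, hP⟩ := hynpoly
  obtain ⟨Q, hQ⟩ := hympoly
  obtain rfl : yn = fun x => P.eval x := funext hP
  obtain rfl : ym = fun x => Q.eval x := funext hQ
  exact IsX1LaguerreEigenpoly.integral_weight_mul_eq_zero hα hθpos (mod_cast hnm)
    (.of_deriv heqn) (.of_deriv heqm)

/-- Orthogonality of exceptional X₁-Laguerre polynomials on [0,∞) with respect to the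
weight `(x-r)^θ x^α e^{-x}`. -/
theorem x1_laguerre_orthogonality
    (α : ℝ) (hα : -1 < α)
    (θ : ℕ) (hθpos : 0 < θ) (hθeven : Even θ)
    (r c0 : ℝ) (n m : ℤ) (hn : 1 ≤ n) (hm : 1 ≤ m) (hnm : n ≠ m)
    (yn ym : ℝ → ℝ)
    (hynpoly : ∃ P : Polynomial ℝ, ∀ x, yn x = P.eval x)
    (hympoly : ∃ P : Polynomial ℝ, ∀ x, ym x = P.eval x)
    (heqn : ∀ x : ℝ,
      x * (x - r) * deriv (deriv yn) x
        + (-x ^ 2 + (α + r + θ + 1) * x - r * (α + 1)) * deriv yn x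
        + ((n : ℝ) * (x - r) - c0) * yn x = 0)
    (heqm : ∀ x : ℝ,
      x * (x - r) * deriv (deriv ym) x
        + (-x ^ 2 + (α + r + θ + 1) * x - r * (α + 1)) * deriv ym x
        + ((m : ℝ) * (x - r) - c0) * ym x = 0) :
    ∫ x in Set.Ioi (0 : ℝ),
      (x - r) ^ θ * x ^ α * Real.exp (-x) * yn x * ym x = 0 :=
  x1_laguerre_orthogonality_general α hα θ hθpos r c0 n m hnm yn ym hynpoly hympoly heqn heqm
end

section
/- Let θ be a positive even integer, let r, c₀ be real numbers, and let n ≠ m be integers with n, m ≥ 1. Suppose yₙ, yₘ : ℝ → ℝ are polynomial functions such that for i ∈ {n, m} and all real x: (x−r)yᵢ''(x) + (−2x² + 2rx + θ)yᵢ'(x) + (2i(x−r) − c₀)yᵢ(x) = 0. Then ∫_{−∞}^{∞} (x−r)^θ e^{−x²} yₙ(x) yₘ(x) dx = 0. -/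
/-!
With `ρ x = (x - r) ^ θ * exp (-x ^ 2)`, the equation reads
`(ρ y')' = ρ (c₀ / (x - r) - 2 i) y`, so `ρ` times the Wronskian `yₙ y'ₘ - y'ₙ yₘ` has derivative
`2 (n - m) ρ yₙ yₘ`. That product is a polynomial times `exp (-x ^ 2)`, hence integrable with
limit `0` at `±∞`, and the integral of its derivative vanishes.
-/

open MeasureTheory Real Filter Topology Polynomial

namespace Polynomial

theorem integrable_eval_mul_exp_neg_sq (p : ℝ[X]) :
    Integrable fun x : ℝ ↦ p.eval x * exp (-x ^ 2) := by
  induction p using Polynomial.induction_on' with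
  | monomial n c =>
    have h := integrable_rpow_mul_exp_neg_mul_sq one_pos (s := n)
      (by linarith [n.cast_nonneg (α := ℝ)])
    simpa [Real.rpow_natCast, mul_assoc] using h.const_mul c
  | add p q hp hq =>
    simp only [eval_add, add_mul]
    exact hp.add hq

theorem tendsto_eval_mul_exp_neg_sq_atTop (p : ℝ[X]) :
    Tendsto (fun x : ℝ ↦ p.eval x * exp (-x ^ 2)) atTop (𝓝 0) := by
  induction p using Polynomial.induction_on' with
  | monomial n c =>
    have hexp : Tendsto (fun x : ℝ ↦ exp (-(1 / 2) * x)) atTop (𝓝 0) :=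
      tendsto_exp_atBot.comp (tendsto_id.const_mul_atTop_of_neg (by norm_num))
    have h := (rpow_mul_exp_neg_mul_sq_isLittleO_exp_neg one_pos n).isBigO.trans_tendsto hexp
    simpa [Real.rpow_natCast, mul_assoc] using h.const_mul c
  | add p q hp hq => simpa [add_mul] using hp.add hq

theorem tendsto_eval_mul_exp_neg_sq_atBot (p : ℝ[X]) :
    Tendsto (fun x : ℝ ↦ p.eval x * exp (-x ^ 2)) atBot (𝓝 0) := by
  simpa [Function.comp_def] using
    (tendsto_eval_mul_exp_neg_sq_atTop (p.comp (-X))).comp tendsto_neg_atBot_atTop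

theorem hasDerivAt_eval_mul_exp_neg_sq (p : ℝ[X]) (x : ℝ) :
    HasDerivAt (fun x ↦ p.eval x * exp (-x ^ 2))
      ((derivative p - 2 * X * p).eval x * exp (-x ^ 2)) x := by
  have hexp : HasDerivAt (fun x : ℝ ↦ exp (-x ^ 2)) (exp (-x ^ 2) * -(2 * x)) x := by
    simpa using ((hasDerivAt_pow 2 x).neg).exp
  refine ((p.hasDerivAt x).fun_mul hexp).congr_deriv ?_
  simp only [eval_sub, eval_mul, eval_X, eval_ofNat]
  ring

theorem integral_eval_derivative_sub_mul_exp_neg_sq (p : ℝ[X]) :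
    ∫ x : ℝ, (derivative p - 2 * X * p).eval x * exp (-x ^ 2) = 0 := by
  have h := integral_of_hasDerivAt_of_tendsto (hasDerivAt_eval_mul_exp_neg_sq p)
    (integrable_eval_mul_exp_neg_sq _) (tendsto_eval_mul_exp_neg_sq_atBot p)
    (tendsto_eval_mul_exp_neg_sq_atTop p)
  simpa using h

theorem X_sub_C_mul_derivative_pow (r : ℝ) (θ : ℕ) :
    (X - C r) * derivative ((X - C r) ^ θ) = C (θ : ℝ) * (X - C r) ^ θ := by
  cases θ with
  | zero => simp
  | succ k =>
    simp only [derivative_X_sub_C_pow, Nat.cast_add, Nat.cast_one, map_add, map_natCast, map_one,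
      add_tsub_cancel_right]
    ring

def IsX1HermiteEigenpolynomial (θ : ℕ) (r c₀ ν : ℝ) (p : ℝ[X]) : Prop :=
  (X - C r) * derivative (derivative p) + (-2 * X ^ 2 + 2 * C r * X + C (θ : ℝ)) * derivative p
    + (C ν * (X - C r) - C c₀) * p = 0

theorem isX1HermiteEigenpolynomial_of_eval {θ : ℕ} {r c₀ ν : ℝ} {p : ℝ[X]}
    (h : ∀ x : ℝ, (x - r) * deriv (deriv fun x ↦ p.eval x) x
      + (-2 * x ^ 2 + 2 * r * x + θ) * deriv (fun x ↦ p.eval x) x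
      + (ν * (x - r) - c₀) * p.eval x = 0) :
    IsX1HermiteEigenpolynomial θ r c₀ ν p := by
  refine Polynomial.funext fun x ↦ ?_
  have hderiv : deriv (fun x ↦ p.eval x) = fun x ↦ (derivative p).eval x :=
    _root_.funext fun x ↦ p.deriv
  simpa [hderiv] using h x

theorem IsX1HermiteEigenpolynomial.derivative_sub_two_X_mul_wronskian
    {θ : ℕ} {r c₀ ν μ : ℝ} {p q : ℝ[X]} (hp : IsX1HermiteEigenpolynomial θ r c₀ ν p)
    (hq : IsX1HermiteEigenpolynomial θ r c₀ μ q) :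
    derivative ((X - C r) ^ θ * wronskian p q) - 2 * X * ((X - C r) ^ θ * wronskian p q)
      = C (ν - μ) * ((X - C r) ^ θ * p * q) := by
  -- After multiplying by `X - C r` both equations can be substituted.
  refine mul_left_cancel₀ (X_sub_C_ne_zero r) ?_
  have hpow := X_sub_C_mul_derivative_pow r θ
  simp only [wronskian, derivative_mul, derivative_sub, C_sub]
  unfold IsX1HermiteEigenpolynomial at hp hq
  linear_combination (X - C r) ^ θ * p * hq - (X - C r) ^ θ * q * hp
    + (p * derivative q - derivative p * q) * hpow

end Polynomial

theorem x1_hermite_orthogonality_general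
    (θ : ℕ)
    (r c0 : ℝ) (n m : ℤ) (hnm : n ≠ m)
    (yn ym : ℝ → ℝ)
    (hynpoly : ∃ P : Polynomial ℝ, ∀ x, yn x = P.eval x)
    (hympoly : ∃ P : Polynomial ℝ, ∀ x, ym x = P.eval x)
    (heqn : ∀ x : ℝ,
      (x - r) * deriv (deriv yn) x
        + (-2 * x ^ 2 + 2 * r * x + θ) * deriv yn x
        + (2 * (n : ℝ) * (x - r) - c0) * yn x = 0)
    (heqm : ∀ x : ℝ,
      (x - r) * deriv (deriv ym) x
        + (-2 * x ^ 2 + 2 * r * x + θ) * deriv ym x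
        + (2 * (m : ℝ) * (x - r) - c0) * ym x = 0) :
    ∫ x : ℝ, (x - r) ^ θ * Real.exp (-x ^ 2) * yn x * ym x = 0 := by
  obtain ⟨p, rfl⟩ : ∃ p : ℝ[X], yn = fun x ↦ p.eval x :=
    hynpoly.imp fun _ hp ↦ funext hp
  obtain ⟨q, rfl⟩ : ∃ q : ℝ[X], ym = fun x ↦ q.eval x :=
    hympoly.imp fun _ hq ↦ funext hq
  have hpq := (isX1HermiteEigenpolynomial_of_eval heqn).derivative_sub_two_X_mul_wronskian
    (isX1HermiteEigenpolynomial_of_eval heqm)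
  have hnm' : (n : ℝ) - m ≠ 0 := sub_ne_zero.2 (mod_cast hnm)
  set w := (X - C r) ^ θ * wronskian p q
  calc ∫ x : ℝ, (x - r) ^ θ * Real.exp (-x ^ 2) * p.eval x * q.eval x
      = (2 * (n : ℝ) - 2 * m)⁻¹ *
          ∫ x : ℝ, (derivative w - 2 * X * w).eval x * Real.exp (-x ^ 2) := by
        rw [← integral_const_mul, hpq]
        congr 1 with x
        simp only [eval_mul, eval_C, eval_pow, eval_sub, eval_X]
        field_simp
    _ = 0 := by rw [integral_eval_derivative_sub_mul_exp_neg_sq, mul_zero]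

/-- Orthogonality of exceptional X₁-Hermite polynomials on (-∞,∞) with respect to the
weight `(x-r)^θ e^{-x²}`. -/
theorem x1_hermite_orthogonality
    (θ : ℕ) (hθpos : 0 < θ) (hθeven : Even θ)
    (r c0 : ℝ) (n m : ℤ) (hn : 1 ≤ n) (hm : 1 ≤ m) (hnm : n ≠ m)
    (yn ym : ℝ → ℝ)
    (hynpoly : ∃ P : Polynomial ℝ, ∀ x, yn x = P.eval x)
    (hympoly : ∃ P : Polynomial ℝ, ∀ x, ym x = P.eval x)
    (heqn : ∀ x : ℝ,
      (x - r) * deriv (deriv yn) x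
        + (-2 * x ^ 2 + 2 * r * x + θ) * deriv yn x
        + (2 * (n : ℝ) * (x - r) - c0) * yn x = 0)
    (heqm : ∀ x : ℝ,
      (x - r) * deriv (deriv ym) x
        + (-2 * x ^ 2 + 2 * r * x + θ) * deriv ym x
        + (2 * (m : ℝ) * (x - r) - c0) * ym x = 0) :
    ∫ x : ℝ, (x - r) ^ θ * Real.exp (-x ^ 2) * yn x * ym x = 0 :=
  x1_hermite_orthogonality_general θ r c0 n m hnm yn ym hynpoly hympoly heqn heqm
end

section
/- Let p, q, r, c₀ be real numbers with q > −1, let θ be a positive even integer, and let n ≠ m be integers with n, m ≥ 1 and max(n, m) < (p − 1 − θ)/2. Suppose yₙ, yₘ : ℝ → ℝ are polynomial functions of degrees exactly n and m respectively, such that for i ∈ {n, m} and all real x: x(x−r)(x+1)yᵢ''(x) + ((θ+2−p)x² + (q+θ+1+r(p−2))x − r(q+1))yᵢ'(x) − (i(i+1+θ−p)(x−r) + c₀)yᵢ(x) = 0. Then ∫₀^∞ (x−r)^θ x^q (x+1)^{−(p+q)} yₙ(x) yₘ(x) dx = 0. -/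
/-!
Let `W = yₘ yₙ' - yₘ' yₙ` be the Wronskian. The two equations give, after cancelling the common
factor `x - r` in `ℝ[X]` (so that nothing is divided by `x - r`), the flux identity
`(x^(q+1) (x+1)^(1-p-q) (x-r)^θ W)' = (λₙ - λₘ) (x-r)^θ x^q (x+1)^(-(p+q)) yₙ yₘ`.
The flux vanishes at `0` since `q + 1 > 0`, and at `∞` by the degree bound, which also makes the
right-hand side integrable. Since `λₙ - λₘ = (n - m)(n + m + 1 + θ - p) ≠ 0`, the integral is zero.
-/

open Polynomial MeasureTheory Set Filter Topology

namespace Polynomial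

variable {R : Type*} [CommRing R]

theorem wronskian_lagrange_identity {σ τ ρ₁ ρ₂ u v : R[X]}
    (hu : σ * derivative (derivative u) + τ * derivative u = ρ₁ * u)
    (hv : σ * derivative (derivative v) + τ * derivative v = ρ₂ * v) :
    σ * derivative (wronskian v u) + τ * wronskian v u = (ρ₁ - ρ₂) * u * v := by
  simp only [wronskian, derivative_sub, derivative_mul]
  linear_combination v * hu - u * hv

-- The factor `X - C r` on the left absorbs the exponent `θ - 1` of `derivative ((X - C r) ^ θ)`.
theorem X_sub_C_mul_flux_X_sub_C_pow_mul (r : R) (θ : ℕ) (A τ₀ w : R[X]) :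
    (X - C r) * (A * derivative ((X - C r) ^ θ * w) + τ₀ * ((X - C r) ^ θ * w)) =
      (X - C r) ^ θ *
        (A * (X - C r) * derivative w + ((X - C r) * τ₀ + (θ : R[X]) * A) * w) := by
  rcases θ with _ | k
  · simp
    ring
  · simp only [derivative_mul, derivative_X_sub_C_pow, Nat.add_sub_cancel, ← C_eq_natCast]
    ring

theorem flux_X_sub_C_pow_mul_wronskian [IsDomain R] {r μ₁ μ₂ c : R} {θ : ℕ}
    {A τ₀ u v : R[X]}
    (hu : A * (X - C r) * derivative (derivative u)
        + ((X - C r) * τ₀ + (θ : R[X]) * A) * derivative u = (C μ₁ * (X - C r) + C c) * u)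
    (hv : A * (X - C r) * derivative (derivative v)
        + ((X - C r) * τ₀ + (θ : R[X]) * A) * derivative v = (C μ₂ * (X - C r) + C c) * v) :
    A * derivative ((X - C r) ^ θ * wronskian v u) + τ₀ * ((X - C r) ^ θ * wronskian v u) =
      C (μ₁ - μ₂) * ((X - C r) ^ θ * (u * v)) := by
  refine mul_left_cancel₀ (X_sub_C_ne_zero r) ?_
  rw [X_sub_C_mul_flux_X_sub_C_pow_mul, wronskian_lagrange_identity hu hv, C_sub]
  ring

theorem natDegree_X_sub_C_pow_mul_le (r : R) (θ : ℕ) (w : R[X]) :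
    ((X - C r) ^ θ * w).natDegree ≤ θ + w.natDegree :=
  (natDegree_mul_le_of_le (natDegree_pow_le_of_le θ (natDegree_X_sub_C_le r)) le_rfl).trans
    (by rw [mul_one])

theorem natDegree_X_sub_C_pow_mul_mul_le (r : R) (θ : ℕ) (a b : R[X]) :
    ((X - C r) ^ θ * (a * b)).natDegree ≤ θ + a.natDegree + b.natDegree :=
  (natDegree_X_sub_C_pow_mul_le r θ _).trans (by have := natDegree_mul_le (p := a) (q := b); omega)

theorem natDegree_wronskian_lt_add_of_pos {a b : R[X]} (h : 0 < a.natDegree + b.natDegree) :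
    (wronskian a b).natDegree < a.natDegree + b.natDegree := by
  by_cases hw : wronskian a b = 0
  · simpa [hw] using h
  · exact natDegree_wronskian_lt_add hw

theorem natDegree_X_sub_C_pow_mul_wronskian_lt (r : R) (θ : ℕ) {a b : R[X]}
    (h : 0 < a.natDegree + b.natDegree) :
    ((X - C r) ^ θ * wronskian a b).natDegree < θ + a.natDegree + b.natDegree := by
  have := natDegree_X_sub_C_pow_mul_le r θ (wronskian a b)
  have := natDegree_wronskian_lt_add_of_pos h
  omega

theorem abs_eval_le_mul_add_one_pow (T : ℝ[X]) :
    ∃ C, ∀ x : ℝ, 0 ≤ x → |T.eval x| ≤ C * (x + 1) ^ T.natDegree := by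
  refine ⟨∑ i ∈ Finset.range (T.natDegree + 1), |T.coeff i|, fun x hx => ?_⟩
  rw [eval_eq_sum_range, Finset.sum_mul]
  refine (Finset.abs_sum_le_sum_abs _ _).trans (Finset.sum_le_sum fun i hi => ?_)
  rw [abs_mul, abs_pow, abs_of_nonneg hx]
  gcongr
  calc x ^ i ≤ (x + 1) ^ i := by gcongr; linarith
    _ ≤ (x + 1) ^ T.natDegree :=
      pow_le_pow_right₀ (by linarith) (Nat.lt_succ_iff.mp (Finset.mem_range.mp hi))

end Polynomial

theorem continuousOn_rpow_mul_add_one_rpow {a b : ℝ} :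
    ContinuousOn (fun x : ℝ => x ^ a * (x + 1) ^ b) (Ioi 0) := fun x (hx : 0 < x) =>
  ((Real.continuousAt_rpow_const x a (.inl hx.ne')).mul
    ((continuousAt_id.add continuousAt_const).rpow_const
      (.inl (by dsimp; positivity)))).continuousWithinAt

theorem integrableOn_Ioi_rpow_mul_add_one_rpow {a c : ℝ} (ha : -1 < a) (hac : a + c < -1) :
    IntegrableOn (fun x : ℝ => x ^ a * (x + 1) ^ c) (Ioi 0) := by
  have hc : c ≤ 0 := by linarith
  have hcont := continuousOn_rpow_mul_add_one_rpow (a := a) (b := c)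
  rw [← Ioc_union_Ioi_eq_Ioi zero_le_one]
  refine IntegrableOn.union ?_ ?_
  · have hdom : IntegrableOn (fun x : ℝ => x ^ a) (Ioc 0 1) :=
      (intervalIntegrable_iff_integrableOn_Ioc_of_le zero_le_one).mp
        (intervalIntegral.intervalIntegrable_rpow' ha)
    refine hdom.mono' ((hcont.mono Ioc_subset_Ioi_self).aestronglyMeasurable measurableSet_Ioc)
      ((ae_restrict_iff' measurableSet_Ioc).mpr (.of_forall fun x hx => ?_))
    have hxa := Real.rpow_nonneg hx.1.le a
    rw [Real.norm_of_nonneg (mul_nonneg hxa (Real.rpow_nonneg (by linarith [hx.1]) c))]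
    exact mul_le_of_le_one_right hxa (Real.rpow_le_one_of_one_le_of_nonpos (by linarith [hx.1]) hc)
  · refine (integrableOn_Ioi_rpow_of_lt hac zero_lt_one).mono'
      ((hcont.mono (Ioi_subset_Ioi zero_le_one)).aestronglyMeasurable measurableSet_Ioi)
      ((ae_restrict_iff' measurableSet_Ioi).mpr (.of_forall fun x (hx : 1 < x) => ?_))
    have hx0 : 0 < x := by linarith
    rw [Real.norm_of_nonneg (by positivity), Real.rpow_add hx0]
    exact mul_le_mul_of_nonneg_left (Real.rpow_le_rpow_of_nonpos hx0 (by linarith) hc)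
      (by positivity)

theorem integrableOn_Ioi_rpow_mul_add_one_rpow_mul_eval {a b : ℝ} (T : ℝ[X]) (ha : -1 < a)
    (hT : a + b + T.natDegree < -1) :
    IntegrableOn (fun x : ℝ => x ^ a * (x + 1) ^ b * T.eval x) (Ioi 0) := by
  obtain ⟨C, hC⟩ := T.abs_eval_le_mul_add_one_pow
  have hdom := (integrableOn_Ioi_rpow_mul_add_one_rpow ha
    (c := b + T.natDegree) (by linarith)).const_mul C
  have hcont := (continuousOn_rpow_mul_add_one_rpow (a := a) (b := b)).mul T.continuous.continuousOn
  refine hdom.mono' (hcont.aestronglyMeasurable measurableSet_Ioi)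
    ((ae_restrict_iff' measurableSet_Ioi).mpr (.of_forall fun x (hx : 0 < x) => ?_))
  have hx1 : 0 < x + 1 := by linarith
  rw [Real.norm_eq_abs, abs_mul, abs_of_nonneg (by positivity), Real.rpow_add hx1,
    Real.rpow_natCast]
  calc x ^ a * (x + 1) ^ b * |T.eval x| ≤ x ^ a * (x + 1) ^ b * (C * (x + 1) ^ T.natDegree) := by
        gcongr; exact hC x hx.le
    _ = C * (x ^ a * ((x + 1) ^ b * (x + 1) ^ T.natDegree)) := by ring

theorem tendsto_rpow_mul_add_one_rpow_mul_eval_atTop {a b : ℝ} (S : ℝ[X]) (ha : 0 ≤ a)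
    (hS : a + b + S.natDegree < 0) :
    Tendsto (fun x : ℝ => x ^ a * (x + 1) ^ b * S.eval x) atTop (𝓝 0) := by
  obtain ⟨C, hC⟩ := S.abs_eval_le_mul_add_one_pow
  have hlim : Tendsto (fun x : ℝ => C * (x + 1) ^ (a + b + S.natDegree)) atTop (𝓝 0) := by
    simpa using ((tendsto_rpow_neg_atTop (neg_pos.mpr hS)).comp
      (tendsto_atTop_add_const_right _ 1 tendsto_id)).const_mul C
  refine squeeze_zero_norm' ?_ hlim
  filter_upwards [eventually_gt_atTop 0] with x hx
  have hx1 : 0 < x + 1 := by linarith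
  rw [Real.norm_eq_abs, abs_mul, abs_of_nonneg (by positivity), Real.rpow_add hx1,
    Real.rpow_add hx1, Real.rpow_natCast]
  calc x ^ a * (x + 1) ^ b * |S.eval x|
        ≤ (x + 1) ^ a * (x + 1) ^ b * (C * (x + 1) ^ S.natDegree) := by
        gcongr
        · linarith
        · exact hC x hx.le
    _ = C * ((x + 1) ^ a * (x + 1) ^ b * (x + 1) ^ S.natDegree) := by ring

/-- The Pearson drift of the Fisher weight:
`(x ^ (a + 1) * (x + 1) ^ (b + 1))' = x ^ a * (x + 1) ^ b * (fisherDrift a b).eval x`. -/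
noncomputable def fisherDrift (a b : ℝ) : ℝ[X] := C (a + 1) * (X + 1) + C (b + 1) * X

theorem hasDerivAt_rpow_mul_add_one_rpow_mul_eval {a b x : ℝ} (hx : 0 < x) (S : ℝ[X]) :
    HasDerivAt (fun y : ℝ => y ^ (a + 1) * (y + 1) ^ (b + 1) * S.eval y)
      (x ^ a * (x + 1) ^ b * (X * (X + 1) * derivative S + fisherDrift a b * S).eval x) x := by
  have hx1 : 0 < x + 1 := by linarith
  have h₁ : HasDerivAt (fun y : ℝ => y ^ (a + 1)) ((a + 1) * x ^ a) x := by
    simpa using Real.hasDerivAt_rpow_const (p := a + 1) (.inl hx.ne')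
  have h₂ : HasDerivAt (fun y : ℝ => (y + 1) ^ (b + 1)) ((b + 1) * (x + 1) ^ b) x := by
    simpa [Function.comp_def] using (Real.hasDerivAt_rpow_const (p := b + 1) (.inl hx1.ne')).comp x
      ((hasDerivAt_id x).add_const 1)
  refine ((h₁.mul h₂).mul (S.hasDerivAt x)).congr_deriv ?_
  simp only [fisherDrift, eval_add, eval_mul, eval_X, eval_C, eval_one, Pi.mul_apply]
  rw [Real.rpow_add_one hx.ne', Real.rpow_add_one hx1.ne']
  ring

theorem integral_rpow_mul_add_one_rpow_mul_eval_eq_zero {a b Δ : ℝ} {S T : ℝ[X]} (ha : -1 < a)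
    (hΔ : Δ ≠ 0) (hflux : X * (X + 1) * derivative S + fisherDrift a b * S = C Δ * T)
    (hT : a + b + T.natDegree < -1) (hS : a + b + 2 + S.natDegree < 0) :
    ∫ x in Ioi 0, x ^ a * (x + 1) ^ b * T.eval x = 0 := by
  set F := fun y : ℝ => y ^ (a + 1) * (y + 1) ^ (b + 1) * S.eval y
  have hF : ∀ x ∈ Ioi (0 : ℝ), HasDerivAt F (Δ * (x ^ a * (x + 1) ^ b * T.eval x)) x := by
    intro x hx
    convert hasDerivAt_rpow_mul_add_one_rpow_mul_eval hx S using 1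
    rw [hflux, eval_mul, eval_C]
    ring
  have hF0 : ContinuousWithinAt F (Ici 0) 0 :=
    ((Real.continuousAt_rpow_const 0 (a + 1) (.inr (by linarith))).mul
      ((continuousAt_id.add continuousAt_const).rpow_const (.inl (by norm_num)))).mul
      S.continuousAt |>.continuousWithinAt
  have hFlim : Tendsto F atTop (𝓝 0) :=
    tendsto_rpow_mul_add_one_rpow_mul_eval_atTop S (by linarith) (by linarith)
  have hint := (integrableOn_Ioi_rpow_mul_add_one_rpow_mul_eval T ha hT).const_mul Δ
  have := integral_Ioi_of_hasDerivAt_of_tendsto hF0 hF hint hFlim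
  rw [integral_const_mul] at this
  simpa [F, Real.zero_rpow (by linarith : a + 1 ≠ 0), hΔ] using this

theorem x1_eigenvalue_sub_ne_zero {p θ : ℝ} {d₁ d₂ : ℕ} (hd : d₁ ≠ d₂)
    (hp : d₁ + d₂ + θ + 1 < p) : (d₁ : ℝ) * (d₁ + 1 + θ - p) - d₂ * (d₂ + 1 + θ - p) ≠ 0 := by
  rw [show (d₁ : ℝ) * (d₁ + 1 + θ - p) - d₂ * (d₂ + 1 + θ - p) =
    (d₁ - d₂) * (d₁ + d₂ + 1 + θ - p) by ring]
  exact mul_ne_zero (sub_ne_zero.mpr (Nat.cast_injective.ne hd)) (by linarith)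

theorem x1_ode_polynomial {p q r c0 μ : ℝ} {θ : ℕ} {P : ℝ[X]}
    (h : ∀ x : ℝ,
      x * (x - r) * (x + 1) * deriv (deriv fun x => P.eval x) x
        + ((θ + 2 - p) * x ^ 2 + (q + θ + 1 + r * (p - 2)) * x
            - r * (q + 1)) * deriv (fun x => P.eval x) x
        - (μ * (x - r) + c0) * P.eval x = 0) :
    X * (X + 1) * (X - C r) * derivative (derivative P)
        + ((X - C r) * fisherDrift q (-(p + q)) + (θ : ℝ[X]) * (X * (X + 1))) * derivative P =
      (C μ * (X - C r) + C c0) * P := by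
  have hderiv : deriv (fun x => P.eval x) = fun x => P.derivative.eval x :=
    funext fun _ => P.deriv
  refine Polynomial.funext fun x => ?_
  have hx := h x
  simp only [hderiv, Polynomial.deriv] at hx
  simp only [fisherDrift, eval_add, eval_sub, eval_mul, eval_X, eval_C, eval_one, eval_natCast]
  linear_combination hx

theorem x1_finite_fisher_orthogonality_general
    (p q r c0 : ℝ) (hq : -1 < q)
    (θ : ℕ)
    (n m : ℤ) (hnm : n ≠ m)
    (hdeg : ((max n m : ℤ) : ℝ) < (p - 1 - θ) / 2)
    (yn ym : ℝ → ℝ)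
    (hynpoly : ∃ P : Polynomial ℝ, (∀ x, yn x = P.eval x) ∧ (P.natDegree : ℤ) = n)
    (hympoly : ∃ P : Polynomial ℝ, (∀ x, ym x = P.eval x) ∧ (P.natDegree : ℤ) = m)
    (heqn : ∀ x : ℝ,
      x * (x - r) * (x + 1) * deriv (deriv yn) x
        + ((θ + 2 - p) * x ^ 2 + (q + θ + 1 + r * (p - 2)) * x
            - r * (q + 1)) * deriv yn x
        - ((n : ℝ) * ((n : ℝ) + 1 + θ - p) * (x - r) + c0) * yn x = 0)
    (heqm : ∀ x : ℝ,
      x * (x - r) * (x + 1) * deriv (deriv ym) x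
        + ((θ + 2 - p) * x ^ 2 + (q + θ + 1 + r * (p - 2)) * x
            - r * (q + 1)) * deriv ym x
        - ((m : ℝ) * ((m : ℝ) + 1 + θ - p) * (x - r) + c0) * ym x = 0) :
    ∫ x in Set.Ioi (0 : ℝ),
      (x - r) ^ θ * x ^ q * (x + 1) ^ (-(p + q)) * yn x * ym x = 0 := by
  obtain ⟨P, hP, rfl⟩ := hynpoly
  obtain ⟨Q, hQ, rfl⟩ := hympoly
  obtain rfl : yn = fun x => P.eval x := funext hP
  obtain rfl : ym = fun x => Q.eval x := funext hQ
  push_cast at hnm hdeg heqn heqm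
  have hp : (P.natDegree + Q.natDegree + θ + 1 : ℝ) < p := by
    have : P.natDegree + Q.natDegree + 1 ≤ 2 * max P.natDegree Q.natDegree := by omega
    have : (P.natDegree + Q.natDegree + 1 : ℝ) ≤ 2 * max (P.natDegree : ℝ) Q.natDegree := by
      exact_mod_cast this
    linarith
  have hS :
      (((X - C r) ^ θ * wronskian Q P).natDegree + 1 : ℝ) ≤ θ + Q.natDegree + P.natDegree := by
    exact_mod_cast natDegree_X_sub_C_pow_mul_wronskian_lt r θ (by omega)
  have hT : (((X - C r) ^ θ * (P * Q)).natDegree : ℝ) ≤ θ + P.natDegree + Q.natDegree := by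
    exact_mod_cast natDegree_X_sub_C_pow_mul_mul_le r θ P Q
  convert integral_rpow_mul_add_one_rpow_mul_eval_eq_zero hq
    (x1_eigenvalue_sub_ne_zero (by exact_mod_cast hnm) hp)
    (flux_X_sub_C_pow_mul_wronskian (x1_ode_polynomial heqn) (x1_ode_polynomial heqm))
    (by linarith) (by linarith) using 3 with x
  simp only [eval_mul, eval_pow, eval_sub, eval_X, eval_C]
  ring

/-- Finite orthogonality of the first finite sequence of exceptional X₁-orthogonal
polynomials on [0,∞) with respect to the weight `(x-r)^θ x^q (x+1)^{-(p+q)}`. -/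
theorem x1_finite_fisher_orthogonality
    (p q r c0 : ℝ) (hq : -1 < q)
    (θ : ℕ) (hθpos : 0 < θ) (hθeven : Even θ)
    (n m : ℤ) (hn : 1 ≤ n) (hm : 1 ≤ m) (hnm : n ≠ m)
    (hdeg : ((max n m : ℤ) : ℝ) < (p - 1 - θ) / 2)
    (yn ym : ℝ → ℝ)
    (hynpoly : ∃ P : Polynomial ℝ, (∀ x, yn x = P.eval x) ∧ (P.natDegree : ℤ) = n)
    (hympoly : ∃ P : Polynomial ℝ, (∀ x, ym x = P.eval x) ∧ (P.natDegree : ℤ) = m)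
    (heqn : ∀ x : ℝ,
      x * (x - r) * (x + 1) * deriv (deriv yn) x
        + ((θ + 2 - p) * x ^ 2 + (q + θ + 1 + r * (p - 2)) * x
            - r * (q + 1)) * deriv yn x
        - ((n : ℝ) * ((n : ℝ) + 1 + θ - p) * (x - r) + c0) * yn x = 0)
    (heqm : ∀ x : ℝ,
      x * (x - r) * (x + 1) * deriv (deriv ym) x
        + ((θ + 2 - p) * x ^ 2 + (q + θ + 1 + r * (p - 2)) * x
            - r * (q + 1)) * deriv ym x
        - ((m : ℝ) * ((m : ℝ) + 1 + θ - p) * (x - r) + c0) * ym x = 0) :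
    ∫ x in Set.Ioi (0 : ℝ),
      (x - r) ^ θ * x ^ q * (x + 1) ^ (-(p + q)) * yn x * ym x = 0 :=
  x1_finite_fisher_orthogonality_general p q r c0 hq θ n m hnm hdeg yn ym hynpoly hympoly heqn heqm
end

section
/- Let p, r, c₀ be real numbers, let θ be a positive even integer, and let n ≠ m be integers with n, m ≥ 1 and max(n, m) < (p − θ − 1)/2. Suppose yₙ, yₘ : ℝ → ℝ are polynomial functions of degrees exactly n and m respectively, such that for i ∈ {n, m} and all real x: (x−r)x²yᵢ''(x) + ((θ+2−p)x² + (1+r(p−2))x − r)yᵢ'(x) − (i(i+1+θ−p)(x−r) + c₀)yᵢ(x) = 0. Then ∫₀^∞ (x−r)^θ x^{−p} e^{−1/x} yₙ(x) yₘ(x) dx = 0. -/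
/-!
Subtracting `yₘ` times the equation of `yₙ` from `yₙ` times that of `yₘ` shows that
`F = (x - r)^θ x² (yₙ' yₘ - yₙ yₘ') x^{-p} e^{-1/x}` has derivative `(λₙ - λₘ) ρ₅ yₙ yₘ` on
`(0, ∞)`, where `λᵢ = i (i + 1 + θ - p)`. `F` tends to `0` at `0⁺` because of `e^{-1/x}`, and at
`∞` because its polynomial part has degree at most `n + m + θ + 2 < p`. Hence
`(λₙ - λₘ) ∫ ρ₅ yₙ yₘ = 0`, while `λₙ - λₘ = (n - m) (n + m + 1 + θ - p) ≠ 0`.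
-/

open Filter Set Polynomial MeasureTheory Topology

noncomputable section

def inverseGammaWeight (p x : ℝ) : ℝ := x ^ (-p) * Real.exp (-1 / x)

lemma hasDerivAt_inverseGammaWeight (p : ℝ) {x : ℝ} (hx : 0 < x) :
    HasDerivAt (inverseGammaWeight p) (inverseGammaWeight p x * (1 - p * x) / x ^ 2) x := by
  have hexp : HasDerivAt (fun y : ℝ => Real.exp (-1 / y)) (Real.exp (-1 / x) / x ^ 2) x := by
    have h := (hasDerivAt_inv hx.ne').fun_neg.exp
    simp only [neg_neg] at h
    convert h using 1
    · funext y; rw [neg_div, one_div]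
    · rw [neg_div, one_div, div_eq_mul_inv]
  refine ((Real.hasDerivAt_rpow_const (Or.inl hx.ne')).mul hexp).congr_deriv ?_
  rw [inverseGammaWeight, Real.rpow_sub_one hx.ne']
  field_simp
  ring

lemma tendsto_inverseGammaWeight_nhdsGT_zero (p : ℝ) :
    Tendsto (inverseGammaWeight p) (𝓝[>] 0) (𝓝 0) := by
  have h := (tendsto_rpow_mul_exp_neg_mul_atTop_nhds_zero p 1 one_pos).comp tendsto_inv_nhdsGT_zero
  refine h.congr' ?_
  filter_upwards [self_mem_nhdsWithin] with x (hx : 0 < x)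
  rw [Function.comp_apply, Real.inv_rpow hx.le, ← Real.rpow_neg hx.le, inverseGammaWeight,
    neg_one_mul, neg_div, one_div]

lemma tendsto_eval_mul_inverseGammaWeight_nhdsGT_zero (R : ℝ[X]) (p : ℝ) :
    Tendsto (fun x => R.eval x * inverseGammaWeight p x) (𝓝[>] 0) (𝓝 0) := by
  simpa using (R.continuous.tendsto 0).mono_left nhdsWithin_le_nhds
    |>.mul (tendsto_inverseGammaWeight_nhdsGT_zero p)

lemma tendsto_eval_mul_inverseGammaWeight_atTop (R : ℝ[X]) {p : ℝ} (h : (R.natDegree : ℝ) < p) :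
    Tendsto (fun x => R.eval x * inverseGammaWeight p x) atTop (𝓝 0) := by
  have hpow : Tendsto (fun x : ℝ => x ^ (R.natDegree : ℝ) * x ^ (-p)) atTop (𝓝 0) := by
    refine (tendsto_rpow_neg_atTop (y := p - R.natDegree) (by linarith)).congr' ?_
    filter_upwards [eventually_gt_atTop 0] with x hx
    rw [← Real.rpow_add hx, neg_sub, sub_eq_add_neg]
  have hO : (fun x => R.eval x * x ^ (-p)) =O[atTop] fun x => x ^ (R.natDegree : ℝ) * x ^ (-p) := by
    refine (isBigO_atTop_of_degree_le R (X ^ R.natDegree) ?_).mul (Asymptotics.isBigO_refl _ _)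
      |>.congr_right ?_
    · rw [degree_X_pow]; exact degree_le_natDegree
    · intro x; simp [Real.rpow_natCast]
  have hexp : Tendsto (fun x : ℝ => Real.exp (-1 / x)) atTop (𝓝 1) := by
    have h := (tendsto_inv_atTop_zero (𝕜 := ℝ)).neg.rexp
    simpa [neg_div] using h
  simpa [inverseGammaWeight, mul_assoc] using (hO.trans_tendsto hpow).mul hexp

def x1Operator (p r c0 : ℝ) (θ : ℕ) (e : ℝ) (P : ℝ[X]) : ℝ[X] :=
  (X - C r) * X ^ 2 * derivative (derivative P)
    + (C (θ + 2 - p) * X ^ 2 + C (1 + r * (p - 2)) * X - C r) * derivative P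
    - (C e * (X - C r) + C c0) * P

lemma x1Operator_eq_zero {p r c0 e : ℝ} {θ : ℕ} {P : ℝ[X]}
    (h : ∀ x : ℝ, (x - r) * x ^ 2 * deriv (deriv fun y => P.eval y) x
      + ((θ + 2 - p) * x ^ 2 + (1 + r * (p - 2)) * x - r) * deriv (fun y => P.eval y) x
      - (e * (x - r) + c0) * P.eval x = 0) :
    x1Operator p r c0 θ e P = 0 := by
  refine Polynomial.funext fun x => ?_
  have hd : deriv (fun y => P.eval y) = fun y => (derivative P).eval y :=
    funext fun y => P.deriv
  simpa [x1Operator, hd, Polynomial.deriv] using h x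

def greenFlux (r : ℝ) (θ : ℕ) (P Q : ℝ[X]) : ℝ[X] :=
  (X - C r) ^ θ * X ^ 2 * (derivative P * Q - P * derivative Q)

lemma X_sub_C_mul_derivative_X_sub_C_pow (r : ℝ) (θ : ℕ) :
    (X - C r) * derivative ((X - C r) ^ θ) = C (θ : ℝ) * (X - C r) ^ θ := by
  rw [derivative_X_sub_C_pow]
  cases θ with
  | zero => simp
  | succ k => rw [Nat.add_sub_cancel, pow_succ]; ring

/- The first-order coefficient is `θ X² + (X - C r) ((2 - p) X + 1)`, so after multiplying by
`X - C r` the identity is a polynomial combination of the two equations and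
`X_sub_C_mul_derivative_X_sub_C_pow`. -/
lemma x1Operator_lagrange_identity {p r c0 a b : ℝ} {θ : ℕ} {P Q : ℝ[X]}
    (hP : x1Operator p r c0 θ a P = 0) (hQ : x1Operator p r c0 θ b Q = 0) :
    X ^ 2 * derivative (greenFlux r θ P Q) + (1 - C p * X) * greenFlux r θ P Q
      = C (a - b) * X ^ 2 * (X - C r) ^ θ * P * Q := by
  refine mul_left_cancel₀ (X_sub_C_ne_zero r) ?_
  have hD := X_sub_C_mul_derivative_X_sub_C_pow r θ
  simp only [x1Operator, greenFlux, derivative_mul, derivative_sub, derivative_X_pow] at hP hQ ⊢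
  simp only [map_sub, map_add, map_mul, map_one, map_ofNat, map_natCast] at hP hQ hD ⊢
  linear_combination (X ^ 2 * (X - C r) ^ θ * Q) * hP - (X ^ 2 * (X - C r) ^ θ * P) * hQ
    + X ^ 4 * (derivative P * Q - P * derivative Q) * hD

lemma greenFlux_eval_zero (r : ℝ) (θ : ℕ) (P Q : ℝ[X]) : (greenFlux r θ P Q).eval 0 = 0 := by
  simp [greenFlux]

lemma natDegree_greenFlux_le (r : ℝ) (θ : ℕ) (P Q : ℝ[X]) :
    (greenFlux r θ P Q).natDegree ≤ θ + 2 + (P.natDegree + Q.natDegree) := by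
  have hW : (derivative P * Q - P * derivative Q).natDegree ≤ P.natDegree + Q.natDegree :=
    (natDegree_sub_le _ _).trans <| max_le
      (natDegree_mul_le.trans (by gcongr; exact natDegree_derivative_le P |>.trans tsub_le_self))
      (natDegree_mul_le.trans (by gcongr; exact natDegree_derivative_le Q |>.trans tsub_le_self))
  refine natDegree_mul_le.trans (add_le_add ?_ hW)
  refine natDegree_mul_le.trans (add_le_add ?_ (natDegree_X_pow_le 2))
  exact natDegree_pow_le.trans (by simp)

lemma hasDerivAt_greenFlux_mul_inverseGammaWeight {p r c0 a b : ℝ} {θ : ℕ} {P Q : ℝ[X]}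
    (hP : x1Operator p r c0 θ a P = 0) (hQ : x1Operator p r c0 θ b Q = 0) {x : ℝ} (hx : 0 < x) :
    HasDerivAt (fun y => (greenFlux r θ P Q).eval y * inverseGammaWeight p y)
      ((a - b) * ((x - r) ^ θ * inverseGammaWeight p x * P.eval x * Q.eval x)) x := by
  refine (((greenFlux r θ P Q).hasDerivAt x).mul (hasDerivAt_inverseGammaWeight p hx)).congr_deriv ?_
  have h := congrArg (eval x) (x1Operator_lagrange_identity hP hQ)
  simp only [eval_add, eval_sub, eval_mul, eval_pow, eval_X, eval_C, eval_one] at h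
  field_simp
  linear_combination inverseGammaWeight p x * h

lemma integral_Ioi_eq_zero_of_hasDerivAt_const_mul {F f : ℝ → ℝ} {a c : ℝ} (hc : c ≠ 0)
    (hderiv : ∀ x ∈ Ioi a, HasDerivAt F (c * f x) x)
    (hleft : Tendsto F (𝓝[>] a) (𝓝 (F a))) (htop : Tendsto F atTop (𝓝 (F a))) :
    ∫ x in Ioi a, f x = 0 := by
  by_cases hf : IntegrableOn f (Ioi a)
  · have h := integral_Ioi_of_hasDerivAt_of_tendsto (continuousWithinAt_Ioi_iff_Ici.mp hleft)
      hderiv (hf.const_mul c) htop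
    rw [sub_self, integral_const_mul] at h
    exact (mul_eq_zero.mp h).resolve_left hc
  · exact integral_undef hf

lemma add_add_lt_of_max_lt {n m : ℤ} {p θ : ℝ} (hnm : n ≠ m)
    (h : ((max n m : ℤ) : ℝ) < (p - θ - 1) / 2) : (n + m + θ + 2 : ℝ) < p := by
  have h2 : ((n + m + 1 : ℤ) : ℝ) ≤ ((2 * max n m : ℤ) : ℝ) := by exact_mod_cast (by omega)
  push_cast at h h2
  linarith

lemma x1_eigenvalue_sub_ne_zero_s7 {n m : ℤ} {p θ : ℝ} (hnm : n ≠ m)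
    (h : ((max n m : ℤ) : ℝ) < (p - θ - 1) / 2) :
    (n : ℝ) * (n + 1 + θ - p) - m * (m + 1 + θ - p) ≠ 0 := by
  have hsum := add_add_lt_of_max_lt hnm h
  rw [show (n : ℝ) * (n + 1 + θ - p) - m * (m + 1 + θ - p) = (n - m) * (n + m + 1 + θ - p) by ring]
  exact mul_ne_zero (sub_ne_zero.mpr (mod_cast hnm)) (by linarith)

end

theorem x1_finite_inverse_gamma_orthogonality_general
    (p r c0 : ℝ)
    (θ : ℕ)
    (n m : ℤ) (hnm : n ≠ m)
    (hdeg : ((max n m : ℤ) : ℝ) < (p - θ - 1) / 2)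
    (yn ym : ℝ → ℝ)
    (hynpoly : ∃ P : Polynomial ℝ, (∀ x, yn x = P.eval x) ∧ (P.natDegree : ℤ) = n)
    (hympoly : ∃ P : Polynomial ℝ, (∀ x, ym x = P.eval x) ∧ (P.natDegree : ℤ) = m)
    (heqn : ∀ x : ℝ,
      (x - r) * x ^ 2 * deriv (deriv yn) x
        + ((θ + 2 - p) * x ^ 2 + (1 + r * (p - 2)) * x - r) * deriv yn x
        - ((n : ℝ) * ((n : ℝ) + 1 + θ - p) * (x - r) + c0) * yn x = 0)
    (heqm : ∀ x : ℝ,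
      (x - r) * x ^ 2 * deriv (deriv ym) x
        + ((θ + 2 - p) * x ^ 2 + (1 + r * (p - 2)) * x - r) * deriv ym x
        - ((m : ℝ) * ((m : ℝ) + 1 + θ - p) * (x - r) + c0) * ym x = 0) :
    ∫ x in Set.Ioi (0 : ℝ),
      (x - r) ^ θ * x ^ (-p) * Real.exp (-1 / x) * yn x * ym x = 0 := by
  obtain ⟨P, hP, rfl⟩ := hynpoly
  obtain ⟨Q, hQ, rfl⟩ := hympoly
  obtain rfl : yn = fun x => P.eval x := funext hP
  obtain rfl : ym = fun x => Q.eval x := funext hQ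
  simp only at heqn heqm ⊢
  have hdegF : ((greenFlux r θ P Q).natDegree : ℝ) < p :=
    calc ((greenFlux r θ P Q).natDegree : ℝ) ≤ θ + 2 + (P.natDegree + Q.natDegree) := by
          exact_mod_cast natDegree_greenFlux_le r θ P Q
      _ < p := by
          have := add_add_lt_of_max_lt hnm hdeg
          push_cast at this
          linarith
  have key := integral_Ioi_eq_zero_of_hasDerivAt_const_mul (x1_eigenvalue_sub_ne_zero_s7 hnm hdeg)
    (fun x hx => hasDerivAt_greenFlux_mul_inverseGammaWeight
      (x1Operator_eq_zero heqn) (x1Operator_eq_zero heqm) hx)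
    (by simpa [greenFlux_eval_zero] using tendsto_eval_mul_inverseGammaWeight_nhdsGT_zero _ p)
    (by simpa [greenFlux_eval_zero] using tendsto_eval_mul_inverseGammaWeight_atTop _ hdegF)
  simpa only [inverseGammaWeight, mul_assoc] using key

/-- Finite orthogonality of the second finite sequence of exceptional X₁-orthogonal
polynomials on (0,∞) with respect to the weight `(x-r)^θ x^{-p} e^{-1/x}`. -/
theorem x1_finite_inverse_gamma_orthogonality
    (p r c0 : ℝ)
    (θ : ℕ) (hθpos : 0 < θ) (hθeven : Even θ)
    (n m : ℤ) (hn : 1 ≤ n) (hm : 1 ≤ m) (hnm : n ≠ m)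
    (hdeg : ((max n m : ℤ) : ℝ) < (p - θ - 1) / 2)
    (yn ym : ℝ → ℝ)
    (hynpoly : ∃ P : Polynomial ℝ, (∀ x, yn x = P.eval x) ∧ (P.natDegree : ℤ) = n)
    (hympoly : ∃ P : Polynomial ℝ, (∀ x, ym x = P.eval x) ∧ (P.natDegree : ℤ) = m)
    (heqn : ∀ x : ℝ,
      (x - r) * x ^ 2 * deriv (deriv yn) x
        + ((θ + 2 - p) * x ^ 2 + (1 + r * (p - 2)) * x - r) * deriv yn x
        - ((n : ℝ) * ((n : ℝ) + 1 + θ - p) * (x - r) + c0) * yn x = 0)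
    (heqm : ∀ x : ℝ,
      (x - r) * x ^ 2 * deriv (deriv ym) x
        + ((θ + 2 - p) * x ^ 2 + (1 + r * (p - 2)) * x - r) * deriv ym x
        - ((m : ℝ) * ((m : ℝ) + 1 + θ - p) * (x - r) + c0) * ym x = 0) :
    ∫ x in Set.Ioi (0 : ℝ),
      (x - r) ^ θ * x ^ (-p) * Real.exp (-1 / x) * yn x * ym x = 0 :=
  x1_finite_inverse_gamma_orthogonality_general p r c0 θ n m hnm hdeg yn ym hynpoly hympoly heqn
    heqm
end

section
/- Let p, q, r, c₀ be real numbers, let θ be a positive even integer, and let n ≠ m be integers with n, m ≥ 1 and max(n, m) < p − (θ+1)/2. Suppose yₙ, yₘ : ℝ → ℝ are polynomial functions of degrees exactly n and m respectively, such that for i ∈ {n, m} and all real x: (x−r)(1+x²)yᵢ''(x) + ((θ+2−2p)x² + (q+2r(p−1))x + θ − rq)yᵢ'(x) − (i(i+1+θ−2p)(x−r) + c₀)yᵢ(x) = 0. Then ∫_{−∞}^{∞} (x−r)^θ (1+x²)^{−p} exp(q·arctan x) yₙ(x) yₘ(x) dx = 0. -/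
/-!
Green's identity. With `σ = (x - r)(1 + x²)` and `τ` the first-order coefficient of the equation,
the factor `u = (1 + x²) ρ₆` satisfies Pearson's equation `σ u' = τ u`. Hence for two
eigenpolynomials `P`, `Q` the function `F = u · W(P, Q)` (`W` the Wronskian) has
`F' = (λ_Q - λ_P) ρ₆ P Q` away from `x = r`, and everywhere by continuity. The degree
bound makes `ρ₆ P Q` integrable and `F` vanish at `±∞`, so `(λ_Q - λ_P) ∫ ρ₆ P Q = 0`;
finally `λ_n - λ_m = (n - m)(n + m + 1 + θ - 2p)` and the second factor is negative.
-/

open Real Filter Topology MeasureTheory Polynomial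

noncomputable def tStudentWeight (p q x : ℝ) : ℝ := (1 + x ^ 2) ^ (-p) * exp (q * arctan x)

lemma hasDerivAt_tStudentWeight (p q x : ℝ) :
    HasDerivAt (tStudentWeight p q) ((q - 2 * p * x) / (1 + x ^ 2) * tStudentWeight p q x) x := by
  have h1 : 0 < 1 + x ^ 2 := by positivity
  have hbase : HasDerivAt (fun y : ℝ => 1 + y ^ 2) (2 * x) x := by
    simpa using (hasDerivAt_pow 2 x).const_add 1
  have hexp : HasDerivAt (fun y => exp (q * arctan y))
      (exp (q * arctan x) * (q * (1 / (1 + x ^ 2)))) x :=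
    ((hasDerivAt_arctan x).const_mul q).exp
  refine ((hbase.rpow_const (p := -p) (Or.inl h1.ne')).mul hexp).congr_deriv ?_
  rw [rpow_sub_one h1.ne', tStudentWeight]
  field_simp
  ring

lemma continuous_tStudentWeight (p q : ℝ) : Continuous (tStudentWeight p q) :=
  continuous_iff_continuousAt.mpr fun x => (hasDerivAt_tStudentWeight p q x).continuousAt

lemma abs_pow_le_one_add_sq_rpow (x : ℝ) {i d : ℕ} (hid : i ≤ d) :
    |x| ^ i ≤ (1 + x ^ 2) ^ ((d : ℝ) / 2) := by
  have hx : |x| ≤ (1 + x ^ 2) ^ ((1 : ℝ) / 2) := by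
    rw [← sqrt_eq_rpow, ← sqrt_sq_eq_abs]
    exact sqrt_le_sqrt (by linarith)
  calc |x| ^ i ≤ ((1 + x ^ 2) ^ ((1 : ℝ) / 2)) ^ i := by gcongr
    _ = (1 + x ^ 2) ^ ((i : ℝ) / 2) := by
      rw [← rpow_natCast, ← rpow_mul (by positivity)]
      ring_nf
    _ ≤ (1 + x ^ 2) ^ ((d : ℝ) / 2) := by
      gcongr
      exact le_add_of_nonneg_right (sq_nonneg x)

lemma Polynomial.exists_abs_eval_le_one_add_sq_rpow {P : ℝ[X]} {d : ℕ}
    (hP : P.natDegree ≤ d) :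
    ∃ C, ∀ x, |P.eval x| ≤ C * (1 + x ^ 2) ^ ((d : ℝ) / 2) := by
  refine ⟨∑ i ∈ Finset.range (P.natDegree + 1), |P.coeff i|, fun x => ?_⟩
  rw [eval_eq_sum_range, Finset.sum_mul]
  refine (Finset.abs_sum_le_sum_abs _ _).trans (Finset.sum_le_sum fun i hi => ?_)
  rw [abs_mul, abs_pow]
  have hi : i ≤ d := (Nat.lt_succ_iff.mp (Finset.mem_range.mp hi)).trans hP
  exact mul_le_mul_of_nonneg_left (abs_pow_le_one_add_sq_rpow x hi) (abs_nonneg _)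

lemma exp_mul_arctan_le (q x : ℝ) : exp (q * arctan x) ≤ exp (|q| * (π / 2)) := by
  refine exp_le_exp.mpr ?_
  calc q * arctan x ≤ |q| * |arctan x| := (le_abs_self _).trans (abs_mul _ _).le
    _ ≤ |q| * (π / 2) := by
      gcongr
      exact abs_le.mpr ⟨(neg_pi_div_two_lt_arctan x).le, (arctan_lt_pi_div_two x).le⟩

lemma exists_abs_tStudentWeight_mul_eval_le (p q : ℝ) {P : ℝ[X]} {d : ℕ}
    (hP : P.natDegree ≤ d) :
    ∃ C, ∀ x, |tStudentWeight p q x * P.eval x| ≤ C * (1 + x ^ 2) ^ (-(2 * p - d) / 2) := by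
  obtain ⟨C, hC⟩ := P.exists_abs_eval_le_one_add_sq_rpow hP
  refine ⟨exp (|q| * (π / 2)) * C, fun x => ?_⟩
  have h1 : 0 < 1 + x ^ 2 := by positivity
  have hsplit : (1 + x ^ 2) ^ (-(2 * p - d) / 2)
      = (1 + x ^ 2) ^ (-p) * (1 + x ^ 2) ^ ((d : ℝ) / 2) := by
    rw [← rpow_add h1]
    ring_nf
  rw [tStudentWeight, abs_mul, abs_mul, abs_of_pos (rpow_pos_of_pos h1 _), abs_of_pos (exp_pos _),
    hsplit]
  calc (1 + x ^ 2) ^ (-p) * exp (q * arctan x) * |P.eval x|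
      ≤ (1 + x ^ 2) ^ (-p) * exp (|q| * (π / 2)) * (C * (1 + x ^ 2) ^ ((d : ℝ) / 2)) := by
        gcongr ?_ * ?_ * ?_
        · exact exp_mul_arctan_le q x
        · exact hC x
    _ = _ := by ring

lemma integrable_tStudentWeight_mul_eval {p : ℝ} (q : ℝ) {P : ℝ[X]} {d : ℕ}
    (hP : P.natDegree ≤ d) (h : d + 1 < 2 * p) :
    Integrable fun x => tStudentWeight p q x * P.eval x := by
  obtain ⟨C, hC⟩ := exists_abs_tStudentWeight_mul_eval_le p q hP
  have hdom : Integrable fun x : ℝ => C * (1 + ‖x‖ ^ 2) ^ (-(2 * p - d) / 2) :=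
    (integrable_rpow_neg_one_add_norm_sq (by simp; linarith)).const_mul C
  refine hdom.mono' ?_ (Eventually.of_forall fun x => ?_)
  · exact ((continuous_tStudentWeight p q).mul P.continuous).aestronglyMeasurable
  · simpa only [norm_eq_abs, sq_abs] using hC x

lemma tendsto_tStudentWeight_mul_eval_cocompact {p : ℝ} (q : ℝ) {P : ℝ[X]} {d : ℕ}
    (hP : P.natDegree ≤ d) (h : d < 2 * p) :
    Tendsto (fun x => tStudentWeight p q x * P.eval x) (cocompact ℝ) (𝓝 0) := by
  obtain ⟨C, hC⟩ := exists_abs_tStudentWeight_mul_eval_le p q hP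
  have hbase : Tendsto (fun x : ℝ => 1 + ‖x‖ ^ 2) (cocompact ℝ) atTop :=
    tendsto_atTop_add_const_left _ 1
      ((tendsto_pow_atTop two_ne_zero).comp tendsto_norm_cocompact_atTop)
  have hdecay :=
    ((tendsto_rpow_neg_atTop (y := (2 * p - d) / 2) (by linarith)).comp hbase).const_mul C
  rw [mul_zero] at hdecay
  refine squeeze_zero_norm (fun x => ?_) hdecay
  simpa only [Function.comp_apply, norm_eq_abs, sq_abs, neg_div] using hC x

lemma Polynomial.natDegree_wronskian_le {R : Type*} [CommRing R] (P Q : R[X]) :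
    (wronskian P Q).natDegree ≤ P.natDegree + Q.natDegree := by
  by_cases hW : wronskian P Q = 0
  · simp [hW]
  · exact (natDegree_wronskian_lt_add hW).le

lemma Polynomial.deriv_deriv_eval {𝕜 : Type*} [NontriviallyNormedField 𝕜] (P : 𝕜[X])
    (x : 𝕜) :
    deriv (deriv fun y => P.eval y) x = P.derivative.derivative.eval x := by
  have h : (deriv fun y => P.eval y) = fun y => P.derivative.eval y := by
    ext y
    exact P.deriv
  rw [h, P.derivative.deriv]

lemma hasDerivAt_mul_wronskian_eval {u : ℝ → ℝ} {u' σ τ a b x : ℝ} {P Q : ℝ[X]}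
    (hσ : σ ≠ 0) (hu : HasDerivAt u u' x) (hpearson : σ * u' = τ * u x)
    (hP : σ * P.derivative.derivative.eval x + τ * P.derivative.eval x = a * P.eval x)
    (hQ : σ * Q.derivative.derivative.eval x + τ * Q.derivative.eval x = b * Q.eval x) :
    HasDerivAt (fun y => u y * (wronskian P Q).eval y)
      ((b - a) / σ * (u x * P.eval x * Q.eval x)) x := by
  refine (hu.mul ((wronskian P Q).hasDerivAt x)).congr_deriv ?_
  simp only [wronskian, derivative_mul, derivative_sub, eval_sub, eval_add, eval_mul]
  field_simp
  linear_combination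
    (P.eval x * Q.derivative.eval x - P.derivative.eval x * Q.eval x) * hpearson
    + u x * P.eval x * hQ - u x * Q.eval x * hP

lemma pearson_equation_one_add_sq_mul_pow_mul_tStudentWeight (θ : ℕ) (p q r x : ℝ) :
    ∃ u', HasDerivAt (fun y => (1 + y ^ 2) * (y - r) ^ θ * tStudentWeight p q y) u' x ∧
      (x - r) * (1 + x ^ 2) * u' = ((θ + 2 - 2 * p) * x ^ 2 + (q + 2 * r * (p - 1)) * x
        + θ - r * q) * ((1 + x ^ 2) * (x - r) ^ θ * tStudentWeight p q x) := by
  have h1 : 0 < 1 + x ^ 2 := by positivity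
  have hbase : HasDerivAt (fun y : ℝ => 1 + y ^ 2) (2 * x) x := by
    simpa using (hasDerivAt_pow 2 x).const_add 1
  have hpow : (x - r) * (θ * (x - r) ^ (θ - 1)) = θ * (x - r) ^ θ := by
    rcases eq_or_ne θ 0 with rfl | hθ
    · simp
    · rw [mul_left_comm, mul_pow_sub_one hθ]
  refine ⟨_, (hbase.mul (((hasDerivAt_id x).sub_const r).pow θ)).mul
    (hasDerivAt_tStudentWeight p q x), ?_⟩
  simp only [Pi.mul_apply, Pi.pow_apply, id]
  field_simp
  linear_combination (1 + x ^ 2) * tStudentWeight p q x * hpow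

theorem integral_pow_mul_tStudentWeight_mul_eval_mul_eval_eq_zero {θ : ℕ} {p q r c₀ a b : ℝ}
    {P Q : ℝ[X]} (hab : a ≠ b) (hdeg : θ + P.natDegree + Q.natDegree + 2 < 2 * p)
    (hP : ∀ x, (x - r) * (1 + x ^ 2) * P.derivative.derivative.eval x
      + ((θ + 2 - 2 * p) * x ^ 2 + (q + 2 * r * (p - 1)) * x + θ - r * q) * P.derivative.eval x
      = (a * (x - r) + c₀) * P.eval x)
    (hQ : ∀ x, (x - r) * (1 + x ^ 2) * Q.derivative.derivative.eval x
      + ((θ + 2 - 2 * p) * x ^ 2 + (q + 2 * r * (p - 1)) * x + θ - r * q) * Q.derivative.eval x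
      = (b * (x - r) + c₀) * Q.eval x) :
    ∫ x, (x - r) ^ θ * tStudentWeight p q x * P.eval x * Q.eval x = 0 := by
  set F := fun y => (1 + y ^ 2) * (y - r) ^ θ * tStudentWeight p q y * (wronskian P Q).eval y
  set g := fun y => (b - a) * ((y - r) ^ θ * tStudentWeight p q y * P.eval y * Q.eval y)
  have hF : ∀ x ≠ r, HasDerivAt F (g x) x := by
    intro x hx
    obtain ⟨u', hu, hpearson⟩ :=
      pearson_equation_one_add_sq_mul_pow_mul_tStudentWeight θ p q r x
    have hσ : (x - r) * (1 + x ^ 2) ≠ 0 := mul_ne_zero (sub_ne_zero.mpr hx) (by positivity)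
    refine (hasDerivAt_mul_wronskian_eval hσ hu hpearson (hP x) (hQ x)).congr_deriv ?_
    field_simp
    ring
  have hw := continuous_tStudentWeight p q
  have hderiv : ∀ x, HasDerivAt F (g x) x :=
    hasDerivAt_of_hasDerivAt_of_ne' hF (by fun_prop) (by fun_prop)
  have hint : Integrable fun x => (x - r) ^ θ * tStudentWeight p q x * P.eval x * Q.eval x := by
    have hR : ((X - C r) ^ θ * P * Q).natDegree ≤ θ + P.natDegree + Q.natDegree :=
      natDegree_mul_le_of_le (natDegree_mul_le_of_le (by simp) le_rfl) le_rfl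
    convert integrable_tStudentWeight_mul_eval q hR (by push_cast; linarith) using 2 with x
    simp only [eval_mul, eval_pow, eval_sub, eval_X, eval_C]
    ring
  have hlim : Tendsto F (cocompact ℝ) (𝓝 0) := by
    have hR : ((1 + X ^ 2) * (X - C r) ^ θ * wronskian P Q).natDegree
        ≤ 2 + θ + (P.natDegree + Q.natDegree) :=
      natDegree_mul_le_of_le (natDegree_mul_le_of_le (by compute_degree!) (by simp))
        (natDegree_wronskian_le P Q)
    convert tendsto_tStudentWeight_mul_eval_cocompact q hR (by push_cast; linarith) using 2 with x
    simp only [F, eval_mul, eval_add, eval_one, eval_pow, eval_sub, eval_X, eval_C]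
    ring
  have hzero := integral_of_hasDerivAt_of_tendsto hderiv (hint.const_mul (b - a))
    (hlim.mono_left atBot_le_cocompact) (hlim.mono_left atTop_le_cocompact)
  rw [integral_const_mul, sub_zero] at hzero
  exact (mul_eq_zero.mp hzero).resolve_left (sub_ne_zero.mpr hab.symm)

theorem x1_finite_tstudent_orthogonality_general
    (p q r c0 : ℝ)
    (θ : ℕ)
    (n m : ℤ) (hnm : n ≠ m)
    (hdeg : ((max n m : ℤ) : ℝ) < p - (θ + 1) / 2)
    (yn ym : ℝ → ℝ)
    (hynpoly : ∃ P : Polynomial ℝ, (∀ x, yn x = P.eval x) ∧ (P.natDegree : ℤ) = n)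
    (hympoly : ∃ P : Polynomial ℝ, (∀ x, ym x = P.eval x) ∧ (P.natDegree : ℤ) = m)
    (heqn : ∀ x : ℝ,
      (x - r) * (1 + x ^ 2) * deriv (deriv yn) x
        + ((θ + 2 - 2 * p) * x ^ 2 + (q + 2 * r * (p - 1)) * x
            + θ - r * q) * deriv yn x
        - ((n : ℝ) * ((n : ℝ) + 1 + θ - 2 * p) * (x - r) + c0) * yn x = 0)
    (heqm : ∀ x : ℝ,
      (x - r) * (1 + x ^ 2) * deriv (deriv ym) x
        + ((θ + 2 - 2 * p) * x ^ 2 + (q + 2 * r * (p - 1)) * x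
            + θ - r * q) * deriv ym x
        - ((m : ℝ) * ((m : ℝ) + 1 + θ - 2 * p) * (x - r) + c0) * ym x = 0) :
    ∫ x : ℝ,
      (x - r) ^ θ * (1 + x ^ 2) ^ (-p) * Real.exp (q * Real.arctan x)
        * yn x * ym x = 0 := by
  obtain ⟨P, hyn, rfl⟩ := hynpoly
  obtain ⟨Q, hym, rfl⟩ := hympoly
  obtain rfl : yn = fun x => P.eval x := funext hyn
  obtain rfl : ym = fun x => Q.eval x := funext hym
  simp only [deriv_deriv_eval, Polynomial.deriv] at heqn heqm
  have hsum : (P.natDegree : ℤ) + Q.natDegree + 1 ≤ 2 * max (P.natDegree : ℤ) Q.natDegree :=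
    by omega
  have hPQ : (θ : ℝ) + P.natDegree + Q.natDegree + 2 < 2 * p := by
    have := (Int.cast_le (R := ℝ)).mpr hsum
    push_cast at this hdeg
    linarith
  have hab : (P.natDegree : ℝ) * (P.natDegree + 1 + θ - 2 * p)
      ≠ Q.natDegree * (Q.natDegree + 1 + θ - 2 * p) := by
    rw [Ne, ← sub_eq_zero, show (P.natDegree : ℝ) * (P.natDegree + 1 + θ - 2 * p)
      - Q.natDegree * (Q.natDegree + 1 + θ - 2 * p)
      = (P.natDegree - Q.natDegree) * (P.natDegree + Q.natDegree + 1 + θ - 2 * p) by ring]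
    exact mul_ne_zero (sub_ne_zero.mpr (by exact_mod_cast hnm)) (by linarith)
  simpa only [tStudentWeight, mul_assoc] using
    integral_pow_mul_tStudentWeight_mul_eval_mul_eval_eq_zero (c₀ := c0) hab hPQ
      (fun x => by linear_combination heqn x) (fun x => by linear_combination heqm x)

/-- Finite orthogonality of the third finite sequence of exceptional X₁-orthogonal
polynomials on (-∞,∞) with respect to the weight
`(x-r)^θ (1+x²)^{-p} exp(q·arctan x)`. -/
theorem x1_finite_tstudent_orthogonality
    (p q r c0 : ℝ)
    (θ : ℕ) (hθpos : 0 < θ) (hθeven : Even θ)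
    (n m : ℤ) (hn : 1 ≤ n) (hm : 1 ≤ m) (hnm : n ≠ m)
    (hdeg : ((max n m : ℤ) : ℝ) < p - (θ + 1) / 2)
    (yn ym : ℝ → ℝ)
    (hynpoly : ∃ P : Polynomial ℝ, (∀ x, yn x = P.eval x) ∧ (P.natDegree : ℤ) = n)
    (hympoly : ∃ P : Polynomial ℝ, (∀ x, ym x = P.eval x) ∧ (P.natDegree : ℤ) = m)
    (heqn : ∀ x : ℝ,
      (x - r) * (1 + x ^ 2) * deriv (deriv yn) x
        + ((θ + 2 - 2 * p) * x ^ 2 + (q + 2 * r * (p - 1)) * x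
            + θ - r * q) * deriv yn x
        - ((n : ℝ) * ((n : ℝ) + 1 + θ - 2 * p) * (x - r) + c0) * yn x = 0)
    (heqm : ∀ x : ℝ,
      (x - r) * (1 + x ^ 2) * deriv (deriv ym) x
        + ((θ + 2 - 2 * p) * x ^ 2 + (q + 2 * r * (p - 1)) * x
            + θ - r * q) * deriv ym x
        - ((m : ℝ) * ((m : ℝ) + 1 + θ - 2 * p) * (x - r) + c0) * ym x = 0) :
    ∫ x : ℝ,
      (x - r) ^ θ * (1 + x ^ 2) ^ (-p) * Real.exp (q * Real.arctan x)
        * yn x * ym x = 0 :=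
  x1_finite_tstudent_orthogonality_general p q r c0 θ n m hnm hdeg yn ym hynpoly hympoly heqn heqm
end

section
/- Let b₂, b₁, b₀, r, r₁, r₂ be real numbers with b₂ ≠ 0 such that b₂x² + b₁x + b₀ = b₂(x − r₁)(x − r₂) for all x (i.e. r₁, r₂ are the real roots). Then real numbers ν and c₀ satisfy the system {2b₂r + b₁ − c₀ + νb₂ = 0, b₂r² + b₁r + b₀ + νc₀ = 0} if and only if (ν, c₀) = (r₁ − r, b₂(r − r₂)) or (ν, c₀) = (r₂ − r, b₂(r − r₁)). -/
/-- Complete solution of the system determining `ν` and `c₀` in terms of the real roots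
`r₁, r₂` of `b₂x² + b₁x + b₀` (with `b₂ ≠ 0`). -/
theorem x1_nu_c0_system_solutions
    (b2 b1 b0 r r1 r2 : ℝ) (hb2 : b2 ≠ 0)
    (hroots : ∀ x : ℝ, b2 * x ^ 2 + b1 * x + b0 = b2 * (x - r1) * (x - r2)) :
    ∀ ν c0 : ℝ,
      (2 * b2 * r + b1 - c0 + ν * b2 = 0 ∧ b2 * r ^ 2 + b1 * r + b0 + ν * c0 = 0)
      ↔ ((ν = r1 - r ∧ c0 = b2 * (r - r2)) ∨ (ν = r2 - r ∧ c0 = b2 * (r - r1))) := by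
  have h0 := hroots 0
  have h1 := hroots 1
  have hb0 : b0 = b2 * (r1 * r2) := by linear_combination h0
  have hb1 : b1 = -b2 * (r1 + r2) := by linear_combination h1 - h0
  intro ν c0
  constructor
  · rintro ⟨e1, e2⟩
    have hc0 : c0 = b2 * (2 * r - r1 - r2 + ν) := by
      rw [hb1] at e1; linarith
    have key : b2 * ((ν - (r1 - r)) * (ν - (r2 - r))) = 0 := by
      rw [hc0, hb0, hb1] at e2; linear_combination e2
    rcases mul_eq_zero.mp key with h | h
    · exact absurd h hb2
    rcases mul_eq_zero.mp h with h | h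
    · left
      constructor
      · linarith
      · rw [hc0]; linear_combination b2 * h
    · right
      constructor
      · linarith
      · rw [hc0]; linear_combination b2 * h
  · rintro (⟨hν, hc⟩ | ⟨hν, hc⟩) <;> subst hν <;> subst hc <;>
      exact ⟨by linear_combination hb1, by linear_combination r * hb1 + hb0⟩
end

section
/- Let a₂, a₁, b₂, b₁ be real numbers and n ≥ 1 an integer. Then for every twice differentiable function p : ℝ → ℝ and every real x, writing y(x) = x·p(x), one has x²(a₂x + a₁)y''(x) + x(b₂x + b₁)y'(x) − (n(b₂ + (n−1)a₂)x + b₁)y(x) = x²·[(a₂x² + a₁x)p''(x) + ((2a₂ + b₂)x + 2a₁ + b₁)p'(x) − (n−1)(na₂ + b₂)p(x)]. In particular, if p satisfies the classical hypergeometric-type equation (a₂x² + a₁x)p'' + ((2a₂+b₂)x + 2a₁+b₁)p' − (n−1)(na₂+b₂)p = 0 on ℝ, then y(x) = x·p(x) satisfies x²(a₂x + a₁)y'' + x(b₂x + b₁)y' − (n(b₂+(n−1)a₂)x + b₁)y = 0 on ℝ, and conversely for all x ≠ 0 (hence for all x if p is twice continuously differentiable). -/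
/-!
Writing `y = x·p`, the product rule gives `y' = p + x p'` and `y'' = 2p' + x p''`; substituting,
every term of the exceptional X₁ operator applied to `y` acquires a factor `x²`, and what remains
is the classical hypergeometric-type operator applied to `p`. Hence the two equations are
equivalent away from `x = 0`, and at `x = 0` by continuity when `p` is `C²`.
-/

section ProductWithId

variable {𝕜 : Type*} [NontriviallyNormedField 𝕜] {p : 𝕜 → 𝕜}

theorem deriv_id_mul {x : 𝕜} (hp : DifferentiableAt 𝕜 p x) :
    deriv (fun t => t * p t) x = p x + x * deriv p x := by
  rw [deriv_fun_mul differentiableAt_fun_id hp, deriv_id'', one_mul]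

theorem deriv_deriv_id_mul {x : 𝕜} (hp : Differentiable 𝕜 p)
    (hp' : DifferentiableAt 𝕜 (deriv p) x) :
    deriv (deriv (fun t => t * p t)) x = 2 * deriv p x + x * deriv (deriv p) x := by
  have hy : deriv (fun t => t * p t) = fun t => p t + t * deriv p t :=
    funext fun t => deriv_id_mul (hp t)
  rw [hy, deriv_fun_add (hp x) (differentiableAt_fun_id.fun_mul hp'), deriv_id_mul hp']
  ring

end ProductWithId

noncomputable def x1Op (a2 a1 b2 b1 n : ℝ) (y : ℝ → ℝ) (x : ℝ) : ℝ :=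
  x ^ 2 * (a2 * x + a1) * deriv (deriv y) x + x * (b2 * x + b1) * deriv y x
    - (n * (b2 + (n - 1) * a2) * x + b1) * y x

/-- The classical hypergeometric-type operator with parameters `(b₂+2a₂, b₁+2a₁; a₂, a₁, 0)`
and eigenvalue `(n−1)(na₂+b₂)`. -/
noncomputable def hypergeometricOp (a2 a1 b2 b1 n : ℝ) (p : ℝ → ℝ) (x : ℝ) : ℝ :=
  (a2 * x ^ 2 + a1 * x) * deriv (deriv p) x + ((2 * a2 + b2) * x + 2 * a1 + b1) * deriv p x
    - (n - 1) * (n * a2 + b2) * p x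

variable {a2 a1 b2 b1 n : ℝ} {p : ℝ → ℝ}

theorem x1Op_id_mul (hp : Differentiable ℝ p) {x : ℝ} (hp' : DifferentiableAt ℝ (deriv p) x) :
    x1Op a2 a1 b2 b1 n (fun t => t * p t) x = x ^ 2 * hypergeometricOp a2 a1 b2 b1 n p x := by
  rw [x1Op, hypergeometricOp, deriv_deriv_id_mul hp hp', deriv_id_mul (hp x)]
  ring

theorem continuous_hypergeometricOp (hp : Differentiable ℝ p)
    (hp' : Differentiable ℝ (deriv p)) (hp'' : Continuous (deriv (deriv p))) :
    Continuous (hypergeometricOp a2 a1 b2 b1 n p) := by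
  have := hp.continuous
  have := hp'.continuous
  unfold hypergeometricOp
  fun_prop

theorem x1_factorization_times_x_general
    (a2 a1 b2 b1 : ℝ) (n : ℕ)
    (p : ℝ → ℝ) (hp : Differentiable ℝ p) (hp' : Differentiable ℝ (deriv p)) :
    (∀ x : ℝ,
      x ^ 2 * (a2 * x + a1) * deriv (deriv (fun t => t * p t)) x
        + x * (b2 * x + b1) * deriv (fun t => t * p t) x
        - ((n : ℝ) * (b2 + ((n : ℝ) - 1) * a2) * x + b1) * (x * p x)
      = x ^ 2 * ((a2 * x ^ 2 + a1 * x) * deriv (deriv p) x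
          + ((2 * a2 + b2) * x + 2 * a1 + b1) * deriv p x
          - ((n : ℝ) - 1) * ((n : ℝ) * a2 + b2) * p x)) ∧
    ((∀ x : ℝ,
        (a2 * x ^ 2 + a1 * x) * deriv (deriv p) x
          + ((2 * a2 + b2) * x + 2 * a1 + b1) * deriv p x
          - ((n : ℝ) - 1) * ((n : ℝ) * a2 + b2) * p x = 0) →
      ∀ x : ℝ,
        x ^ 2 * (a2 * x + a1) * deriv (deriv (fun t => t * p t)) x
          + x * (b2 * x + b1) * deriv (fun t => t * p t) x
          - ((n : ℝ) * (b2 + ((n : ℝ) - 1) * a2) * x + b1) * (x * p x) = 0) ∧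
    ((∀ x : ℝ,
        x ^ 2 * (a2 * x + a1) * deriv (deriv (fun t => t * p t)) x
          + x * (b2 * x + b1) * deriv (fun t => t * p t) x
          - ((n : ℝ) * (b2 + ((n : ℝ) - 1) * a2) * x + b1) * (x * p x) = 0) →
      ∀ x : ℝ, x ≠ 0 →
        (a2 * x ^ 2 + a1 * x) * deriv (deriv p) x
          + ((2 * a2 + b2) * x + 2 * a1 + b1) * deriv p x
          - ((n : ℝ) - 1) * ((n : ℝ) * a2 + b2) * p x = 0) ∧
    (Continuous (deriv (deriv p)) →
      (∀ x : ℝ,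
        x ^ 2 * (a2 * x + a1) * deriv (deriv (fun t => t * p t)) x
          + x * (b2 * x + b1) * deriv (fun t => t * p t) x
          - ((n : ℝ) * (b2 + ((n : ℝ) - 1) * a2) * x + b1) * (x * p x) = 0) →
      ∀ x : ℝ,
        (a2 * x ^ 2 + a1 * x) * deriv (deriv p) x
          + ((2 * a2 + b2) * x + 2 * a1 + b1) * deriv p x
          - ((n : ℝ) - 1) * ((n : ℝ) * a2 + b2) * p x = 0) := by
  have factor : ∀ x, x1Op a2 a1 b2 b1 n (fun t => t * p t) x
      = x ^ 2 * hypergeometricOp a2 a1 b2 b1 n p x := fun x => x1Op_id_mul hp (hp' x)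
  have off_zero (h : ∀ x, x1Op a2 a1 b2 b1 n (fun t => t * p t) x = 0) (x : ℝ) (hx : x ≠ 0) :
      hypergeometricOp a2 a1 b2 b1 n p x = 0 := by
    have := h x
    rwa [factor, mul_eq_zero, or_iff_right (pow_ne_zero 2 hx)] at this
  refine ⟨factor, fun h x => ?_, off_zero, fun hp'' h => congrFun ?_⟩
  · exact (factor x).trans (by rw [hypergeometricOp, h x, mul_zero])
  · exact (continuous_hypergeometricOp hp hp' hp'').ext_on (dense_compl_singleton 0)
      continuous_const (off_zero h)

/-- Factorization `y = x·p` reducing the exceptional X₁ equation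
`x²(a₂x+a₁)y'' + x(b₂x+b₁)y' − (n(b₂+(n−1)a₂)x + b₁)y = 0` to a classical
hypergeometric-type equation for `p`, together with both implications. -/
theorem x1_factorization_times_x
    (a2 a1 b2 b1 : ℝ) (n : ℕ) (hn : 1 ≤ n)
    (p : ℝ → ℝ) (hp : Differentiable ℝ p) (hp' : Differentiable ℝ (deriv p)) :
    (∀ x : ℝ,
      x ^ 2 * (a2 * x + a1) * deriv (deriv (fun t => t * p t)) x
        + x * (b2 * x + b1) * deriv (fun t => t * p t) x
        - ((n : ℝ) * (b2 + ((n : ℝ) - 1) * a2) * x + b1) * (x * p x)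
      = x ^ 2 * ((a2 * x ^ 2 + a1 * x) * deriv (deriv p) x
          + ((2 * a2 + b2) * x + 2 * a1 + b1) * deriv p x
          - ((n : ℝ) - 1) * ((n : ℝ) * a2 + b2) * p x)) ∧
    ((∀ x : ℝ,
        (a2 * x ^ 2 + a1 * x) * deriv (deriv p) x
          + ((2 * a2 + b2) * x + 2 * a1 + b1) * deriv p x
          - ((n : ℝ) - 1) * ((n : ℝ) * a2 + b2) * p x = 0) →
      ∀ x : ℝ,
        x ^ 2 * (a2 * x + a1) * deriv (deriv (fun t => t * p t)) x
          + x * (b2 * x + b1) * deriv (fun t => t * p t) x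
          - ((n : ℝ) * (b2 + ((n : ℝ) - 1) * a2) * x + b1) * (x * p x) = 0) ∧
    ((∀ x : ℝ,
        x ^ 2 * (a2 * x + a1) * deriv (deriv (fun t => t * p t)) x
          + x * (b2 * x + b1) * deriv (fun t => t * p t) x
          - ((n : ℝ) * (b2 + ((n : ℝ) - 1) * a2) * x + b1) * (x * p x) = 0) →
      ∀ x : ℝ, x ≠ 0 →
        (a2 * x ^ 2 + a1 * x) * deriv (deriv p) x
          + ((2 * a2 + b2) * x + 2 * a1 + b1) * deriv p x
          - ((n : ℝ) - 1) * ((n : ℝ) * a2 + b2) * p x = 0) ∧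
    (Continuous (deriv (deriv p)) →
      (∀ x : ℝ,
        x ^ 2 * (a2 * x + a1) * deriv (deriv (fun t => t * p t)) x
          + x * (b2 * x + b1) * deriv (fun t => t * p t) x
          - ((n : ℝ) * (b2 + ((n : ℝ) - 1) * a2) * x + b1) * (x * p x) = 0) →
      ∀ x : ℝ,
        (a2 * x ^ 2 + a1 * x) * deriv (deriv p) x
          + ((2 * a2 + b2) * x + 2 * a1 + b1) * deriv p x
          - ((n : ℝ) - 1) * ((n : ℝ) * a2 + b2) * p x = 0) :=
  x1_factorization_times_x_general a2 a1 b2 b1 n p hp hp'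
end
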